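/- arXiv:2310.01359 — 3 statements merged into one kernel-verified Lean document; each statement's English description precedes it below -/
import Mathlib

section
/- Suppose (θ1,θ2,θ3) ∉ 𝒜 ∪ ℬ. Then μ(B_r(0)) = +∞ for every r > 0; consequently μ is a Radon measure on ℝ^n if and only if (θ1,θ2,θ3) ∈ 𝒜 ∪ ℬ. -/
open MeasureTheory Metric ENNReal RealInnerProductSpace

noncomputable section

namespace Aniso

/-- The ambient Euclidean space `ℝ^n` with `n = d + 1`. -/
abbrev Spc (d : ℕ) := EuclideanSpace ℝ (Fin (d + 1))

/-- `|x'|`, the Euclidean norm of the first `n - 1 = d` coordinates. -/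
def normPrime (d : ℕ) (x : Spc d) : ℝ := Real.sqrt (∑ i : Fin d, x i.castSucc ^ 2)

/-- `x_n`, the last coordinate. -/
def xLast (d : ℕ) (x : Spc d) : ℝ := x (Fin.last d)

/-- The anisotropic weight `w(x) = |x'|^θ₁ |x|^θ₂ |x_n|^θ₃`. -/
def wt (d : ℕ) (θ₁ θ₂ θ₃ : ℝ) (x : Spc d) : ℝ :=
  normPrime d x ^ θ₁ * ‖x‖ ^ θ₂ * |xLast d x| ^ θ₃

/-- The measure `dμ = w dx`. -/
def muW (d : ℕ) (θ₁ θ₂ θ₃ : ℝ) : Measure (Spc d) :=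
  volume.withDensity fun x => ENNReal.ofReal (wt d θ₁ θ₂ θ₃ x)

def inA (n : ℕ) (θ₁ θ₂ θ₃ : ℝ) : Prop :=
  -((n : ℝ) - 1) < θ₁ ∧ 0 ≤ θ₂ ∧ -1 < θ₃

def inB (n : ℕ) (θ₁ θ₂ θ₃ : ℝ) : Prop :=
  -((n : ℝ) - 1) < θ₁ ∧ θ₂ < 0 ∧ -1 < θ₃ ∧ -(n : ℝ) < θ₁ + θ₂ + θ₃

def inC (n : ℕ) (p θ₁ θ₂ θ₃ : ℝ) : Prop :=
  θ₁ < ((n : ℝ) - 1) * (p - 1) ∧ θ₂ ≤ 0 ∧ θ₃ < p - 1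

def inD (n : ℕ) (p θ₁ θ₂ θ₃ : ℝ) : Prop :=
  θ₁ < ((n : ℝ) - 1) * (p - 1) ∧ 0 < θ₂ ∧ θ₃ < p - 1 ∧ θ₁ + θ₂ + θ₃ < (n : ℝ) * (p - 1)

def inF (n : ℕ) (p0 θ₁ θ₂ θ₃ : ℝ) : Prop :=
  -(((n : ℝ) - 1) * (p0 - 1) / p0) < θ₁ ∧ 0 ≤ θ₂ ∧ -((p0 - 1) / p0) < θ₃

def inG (n : ℕ) (p0 θ₁ θ₂ θ₃ : ℝ) : Prop :=
  -(((n : ℝ) - 1) * (p0 - 1) / p0) < θ₁ ∧ θ₂ < 0 ∧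
    -((n : ℝ) * (p0 - 1) / p0) < θ₁ + θ₂ + θ₃

/-- The `A_p` product `(⨍_B w)(⨍_B w^{-1/(p-1)})^{p-1}` over the ball `B = B_R(c)`,
with divergent integrals interpreted as `+∞`. -/
def apProd (d : ℕ) (p θ₁ θ₂ θ₃ : ℝ) (c : Spc d) (R : ℝ) : ℝ≥0∞ :=
  (∫⁻ x in ball c R, ENNReal.ofReal (wt d θ₁ θ₂ θ₃ x)) / volume (ball c R) *
    ((∫⁻ x in ball c R, ENNReal.ofReal (wt d θ₁ θ₂ θ₃ x ^ (-(1 / (p - 1))))) /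
        volume (ball c R)) ^ (p - 1)

/-- The half ball `B_r^+(x₀) = B_r(x₀) ∩ {x_n > 0}`. -/
def BplusAt (d : ℕ) (x0 : Spc d) (r : ℝ) : Set (Spc d) :=
  ball x0 r ∩ {x | 0 < xLast d x}

/-- `B_r^+ = B_r(0) ∩ {x_n > 0}`. -/
def Bplus (d : ℕ) (r : ℝ) : Set (Spc d) := BplusAt d 0 r

/-- The flat boundary portion `∂'B_1^+ = B_1(0) ∩ {x_n = 0}`. -/
def bdryFlat (d : ℕ) : Set (Spc d) := ball 0 1 ∩ {x | xLast d x = 0}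

/-- The curved boundary portion `∂''B_1^+ = ∂(B_1^+) \ ∂'B_1^+`. -/
def bdryCurved (d : ℕ) : Set (Spc d) := frontier (Bplus d 1) \ bdryFlat d

/-- The Sobolev exponent `χ = (n+θ₁+θ₂+θ₃)/(n+θ₁+θ₂+θ₃-p)`. -/
def chiE (d : ℕ) (p θ₁ θ₂ θ₃ : ℝ) : ℝ :=
  ((d : ℝ) + 1 + θ₁ + θ₂ + θ₃) / ((d : ℝ) + 1 + θ₁ + θ₂ + θ₃ - p)

/-- `s = mpχ/(m(χ-1)+χ(p-1))`. -/
def sE (d : ℕ) (p m θ₁ θ₂ θ₃ : ℝ) : ℝ :=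
  m * p * chiE d p θ₁ θ₂ θ₃ /
    (m * (chiE d p θ₁ θ₂ θ₃ - 1) + chiE d p θ₁ θ₂ θ₃ * (p - 1))

/-- `τ = (χ(m-1)(p-1)+m)/(m(χ-1)+χ(p-1))`. -/
def tauE (d : ℕ) (p m θ₁ θ₂ θ₃ : ℝ) : ℝ :=
  (chiE d p θ₁ θ₂ θ₃ * (m - 1) * (p - 1) + m) /
    (m * (chiE d p θ₁ θ₂ θ₃ - 1) + chiE d p θ₁ θ₂ θ₃ * (p - 1))

/-- The quantity `𝓗 = ‖f₀‖^{1/(p-1)}_{L^s(B_1^+, w^{-τ})} + ‖f₁‖^{1/(p-1)}_{L^s(B_1^+, w)}`. -/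
def Hq (d : ℕ) (p m θ₁ θ₂ θ₃ : ℝ) (f0 f1 : Spc d → ℝ) : ℝ≥0∞ :=
  (∫⁻ x in Bplus d 1,
      ENNReal.ofReal (|f0 x| ^ sE d p m θ₁ θ₂ θ₃ *
        wt d θ₁ θ₂ θ₃ x ^ (-(tauE d p m θ₁ θ₂ θ₃)))) ^
      (1 / (sE d p m θ₁ θ₂ θ₃ * (p - 1))) +
  (∫⁻ x in Bplus d 1,
      ENNReal.ofReal (|f1 x| ^ sE d p m θ₁ θ₂ θ₃ * wt d θ₁ θ₂ θ₃ x)) ^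
      (1 / (sE d p m θ₁ θ₂ θ₃ * (p - 1)))

/-- `u` is a weak solution of `-div(w|∇u|^{p-2}∇u) = f₀ + w f₁` in `B_1^+`
with `u = 0` on `∂'B_1^+`. -/
structure IsWeakSol (d : ℕ) (p θ₁ θ₂ θ₃ : ℝ) (f0 f1 u : Spc d → ℝ) : Prop where
  cont : ContinuousOn u (closure (Bplus d 1))
  reg : ContDiffOn ℝ 1 u (Bplus d 1)
  finite : (∫⁻ x in Bplus d 1,
      ENNReal.ofReal ((|u x| ^ p + ‖gradient u x‖ ^ p) * wt d θ₁ θ₂ θ₃ x)) < ⊤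
  vanish : ∀ x ∈ bdryFlat d, u x = 0
  weak : ∀ φ : Spc d → ℝ, ContDiff ℝ (⊤ : ℕ∞) φ → HasCompactSupport φ → tsupport φ ⊆ Bplus d 1 →
    ∫ x in Bplus d 1,
        wt d θ₁ θ₂ θ₃ x * ‖gradient u x‖ ^ (p - 2) * (inner ℝ (gradient u x) (gradient φ x) : ℝ) =
      ∫ x in Bplus d 1, (f0 x + wt d θ₁ θ₂ θ₃ x * f1 x) * φ x


section AuxLemmas
open Set Module

theorem lintegral_fun_norm_haar {E : Type*} [NormedAddCommGroup E] [NormedSpace ℝ E]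
    [MeasurableSpace E] [BorelSpace E] [Nontrivial E] [FiniteDimensional ℝ E]
    (μ : Measure E) [μ.IsAddHaarMeasure] (f : ℝ → ℝ≥0∞) (hf : Measurable f) :
    ∫⁻ x, f ‖x‖ ∂μ = μ.toSphere Set.univ *
      ∫⁻ r in Set.Ioi (0:ℝ), ENNReal.ofReal (r ^ (finrank ℝ E - 1)) * f r := by
  have h1 : ∫⁻ x, f ‖x‖ ∂μ = ∫⁻ x : ({0}ᶜ : Set E), f ‖x.1‖ ∂(μ.comap (↑)) := by
    rw [lintegral_subtype_comap (measurableSet_singleton (0:E)).compl (fun x => f ‖x‖),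
      MeasureTheory.restrict_compl_singleton]
  have h2 : ∫⁻ x : ({0}ᶜ : Set E), f ‖x.1‖ ∂(μ.comap (↑))
      = ∫⁻ p : sphere (0:E) 1 × Ioi (0:ℝ), f p.2
          ∂(μ.toSphere.prod (.volumeIoiPow (finrank ℝ E - 1))) := by
    have := μ.measurePreserving_homeomorphUnitSphereProd.lintegral_comp
      (hf.comp (measurable_subtype_coe.comp measurable_snd)); simpa [homeomorphUnitSphereProd] using this
  have h3 : ∫⁻ p : sphere (0:E) 1 × Ioi (0:ℝ), f p.2
        ∂(μ.toSphere.prod (.volumeIoiPow (finrank ℝ E - 1)))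
      = μ.toSphere Set.univ *
        ∫⁻ r : Ioi (0:ℝ), f r ∂(Measure.volumeIoiPow (finrank ℝ E - 1)) := by
    have hm : AEMeasurable (fun p : sphere (0:E) 1 × Ioi (0:ℝ) => f p.2)
        (μ.toSphere.prod (.volumeIoiPow (finrank ℝ E - 1))) :=
      (hf.comp (measurable_subtype_coe.comp measurable_snd)).aemeasurable
    rw [lintegral_prod _ hm]
    simp [lintegral_const, mul_comm]
  have h4 : ∫⁻ r : Ioi (0:ℝ), f r ∂(Measure.volumeIoiPow (finrank ℝ E - 1))
      = ∫⁻ r in Set.Ioi (0:ℝ), ENNReal.ofReal (r ^ (finrank ℝ E - 1)) * f r := by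
    have hg : Measurable (fun r : Ioi (0:ℝ) => f r) := hf.comp measurable_subtype_coe
    rw [Measure.volumeIoiPow,
      lintegral_withDensity_eq_lintegral_mul _
        ((measurable_subtype_coe.pow_const _).ennreal_ofReal) hg,
      ← lintegral_subtype_comap measurableSet_Ioi
        (fun r : ℝ => ENNReal.ofReal (r ^ (finrank ℝ E - 1)) * f r)]
    rfl
  rw [h1, h2, h3, h4]

theorem lintegral_Ioo_rpow_lt_top {b : ℝ} (hb : -1 < b) (R : ℝ) :
    ∫⁻ t in Ioo (0:ℝ) R, ENNReal.ofReal (t ^ b) < ⊤ := by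
  rcases le_or_gt R 0 with hR | hR
  · rw [Ioo_eq_empty (not_lt.2 hR)]; simp
  · exact ((intervalIntegral.integrableOn_Ioo_rpow_iff hR).2 hb).setLIntegral_lt_top

theorem lintegral_Ioo_rpow_eq_top {b : ℝ} (hb : b ≤ -1) {R : ℝ} (hR : 0 < R) :
    ∫⁻ t in Ioo (0:ℝ) R, ENNReal.ofReal (t ^ b) = ⊤ := by
  by_contra h
  have hint : IntegrableOn (fun t : ℝ => t ^ b) (Ioo (0:ℝ) R) := by
    refine ⟨(measurable_id.pow measurable_const).aestronglyMeasurable.restrict, ?_⟩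
    rw [hasFiniteIntegral_iff_norm]
    have : ∀ t ∈ Ioo (0:ℝ) R, ENNReal.ofReal ‖t ^ b‖ = ENNReal.ofReal (t ^ b) := by
      intro t ht
      rw [Real.norm_eq_abs, abs_of_nonneg (Real.rpow_nonneg ht.1.le _)]
    rw [setLIntegral_congr_fun measurableSet_Ioo this]
    exact lt_top_iff_ne_top.2 h
  exact absurd ((intervalIntegral.integrableOn_Ioo_rpow_iff hR).1 hint) (not_lt.2 hb)

theorem lintegral_Ioo_neg_abs {b R : ℝ} :
    ∫⁻ t in Ioo (-R) (0:ℝ), ENNReal.ofReal (|t| ^ b) =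
      ∫⁻ t in Ioo (0:ℝ) R, ENNReal.ofReal (t ^ b) := by
  have hmp : MeasurePreserving (fun t : ℝ => -t) volume volume :=
    Measure.measurePreserving_neg _
  have := hmp.setLIntegral_comp_emb (MeasurableEquiv.neg ℝ).measurableEmbedding
    (fun t : ℝ => ENNReal.ofReal (|t| ^ b)) (Ioo (0:ℝ) R)
  have himg : (fun t : ℝ => -t) '' Ioo (0:ℝ) R = Ioo (-R) (0:ℝ) := by
    rw [show (fun t : ℝ => -t) = Neg.neg from rfl, Set.image_neg_eq_neg, Set.neg_Ioo, neg_zero]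
  rw [himg] at this
  rw [← this]
  refine setLIntegral_congr_fun measurableSet_Ioo ?_
  intro t ht
  beta_reduce; rw [abs_neg, abs_of_nonneg ht.1.le]

theorem lintegral_Ioo_abs_lt_top {b : ℝ} (hb : -1 < b) (R : ℝ) :
    ∫⁻ t in Ioo (-R) R, ENNReal.ofReal (|t| ^ b) < ⊤ := by
  have hsub : Ioo (-R) R ⊆ Ioo (-R) 0 ∪ ({0} ∪ Ioo 0 R) := by
    intro t ht
    rcases lt_trichotomy t 0 with h | h | h
    · exact Or.inl ⟨ht.1, h⟩
    · exact Or.inr (Or.inl (by simp [h]))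
    · exact Or.inr (Or.inr ⟨h, ht.2⟩)
  calc ∫⁻ t in Ioo (-R) R, ENNReal.ofReal (|t| ^ b)
      ≤ ∫⁻ t in Ioo (-R) 0 ∪ ({0} ∪ Ioo 0 R), ENNReal.ofReal (|t| ^ b) :=
        lintegral_mono_set hsub
    _ ≤ (∫⁻ t in Ioo (-R) 0, ENNReal.ofReal (|t| ^ b)) +
        ∫⁻ t in ({0} ∪ Ioo 0 R), ENNReal.ofReal (|t| ^ b) := lintegral_union_le _ _ _
    _ ≤ (∫⁻ t in Ioo (-R) 0, ENNReal.ofReal (|t| ^ b)) +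
        ((∫⁻ t in ({0} : Set ℝ), ENNReal.ofReal (|t| ^ b)) +
          ∫⁻ t in Ioo 0 R, ENNReal.ofReal (|t| ^ b)) := by
        gcongr; exact lintegral_union_le _ _ _
    _ < ⊤ := by
        rw [lintegral_Ioo_neg_abs, setLIntegral_measure_zero _ _ Real.volume_singleton]
        have h2 : ∫⁻ t in Ioo (0:ℝ) R, ENNReal.ofReal (|t| ^ b) =
            ∫⁻ t in Ioo (0:ℝ) R, ENNReal.ofReal (t ^ b) := by
          refine setLIntegral_congr_fun measurableSet_Ioo ?_
          intro t ht; beta_reduce; rw [abs_of_nonneg ht.1.le]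
        rw [h2]
        simpa using ENNReal.add_lt_top.2 ⟨lintegral_Ioo_rpow_lt_top hb R,
          lintegral_Ioo_rpow_lt_top hb R⟩

theorem euclid_nontrivial {d : ℕ} (hd : 1 ≤ d) : Nontrivial (EuclideanSpace ℝ (Fin d)) :=
  nontrivial_of_finrank_pos (R := ℝ) (by rw [finrank_euclideanSpace_fin]; omega)

theorem lintegral_ball_rpow (d : ℕ) (hd : 1 ≤ d) (α R : ℝ) :
    ∫⁻ y in ball (0 : EuclideanSpace ℝ (Fin d)) R, ENNReal.ofReal (‖y‖ ^ α) =
      (volume : Measure (EuclideanSpace ℝ (Fin d))).toSphere Set.univ *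
        ∫⁻ r in Ioo (0:ℝ) R, ENNReal.ofReal (r ^ ((d:ℝ) - 1 + α)) := by
  haveI := euclid_nontrivial hd
  set f : ℝ → ℝ≥0∞ := (Iio R).indicator (fun r => ENNReal.ofReal (r ^ α)) with hfdef
  have hf : Measurable f :=
    ((measurable_id.pow measurable_const).ennreal_ofReal).indicator measurableSet_Iio
  have h0 : ∫⁻ y in ball (0 : EuclideanSpace ℝ (Fin d)) R, ENNReal.ofReal (‖y‖ ^ α)
      = ∫⁻ y : EuclideanSpace ℝ (Fin d), f ‖y‖ := by
    rw [← lintegral_indicator measurableSet_ball]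
    refine lintegral_congr fun y => ?_
    by_cases h : ‖y‖ < R
    · rw [Set.indicator_of_mem (mem_ball_zero_iff.2 h), hfdef,
        Set.indicator_of_mem (mem_Iio.2 h)]
    · rw [Set.indicator_of_notMem (fun hc => h (mem_ball_zero_iff.1 hc)), hfdef,
        Set.indicator_of_notMem (fun hc => h (mem_Iio.1 hc))]
  rw [h0, lintegral_fun_norm_haar _ f hf]
  congr 1
  have hrank : finrank ℝ (EuclideanSpace ℝ (Fin d)) = d := finrank_euclideanSpace_fin
  rw [hrank]
  have hfun : (fun r : ℝ => ENNReal.ofReal (r ^ (d - 1)) * f r)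
      = (Iio R).indicator (fun r => ENNReal.ofReal (r ^ (d - 1)) * ENNReal.ofReal (r ^ α)) := by
    funext r
    by_cases h : r ∈ Iio R <;> simp [hfdef, Set.indicator_apply, h]
  rw [hfun, lintegral_indicator measurableSet_Iio, Measure.restrict_restrict measurableSet_Iio,
    Set.Iio_inter_Ioi]
  refine setLIntegral_congr_fun measurableSet_Ioo (fun r hr => ?_)
  rw [← ENNReal.ofReal_mul (pow_nonneg hr.1.le _), ← Real.rpow_natCast r (d - 1),
    ← Real.rpow_add hr.1]
  congr 2
  rw [Nat.cast_sub hd, Nat.cast_one]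

theorem lintegral_ball_rpow_lt_top {d : ℕ} (hd : 1 ≤ d) {α : ℝ} (hα : -(d:ℝ) < α) (R : ℝ) :
    ∫⁻ y in ball (0 : EuclideanSpace ℝ (Fin d)) R, ENNReal.ofReal (‖y‖ ^ α) < ⊤ := by
  haveI := euclid_nontrivial hd
  rw [lintegral_ball_rpow d hd α R]
  exact ENNReal.mul_lt_top (measure_lt_top _ _) (lintegral_Ioo_rpow_lt_top (by linarith) R)

theorem lintegral_ball_rpow_eq_top {d : ℕ} (hd : 1 ≤ d) {α : ℝ} (hα : α ≤ -(d:ℝ)) {R : ℝ}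
    (hR : 0 < R) :
    ∫⁻ y in ball (0 : EuclideanSpace ℝ (Fin d)) R, ENNReal.ofReal (‖y‖ ^ α) = ⊤ := by
  haveI := euclid_nontrivial hd
  rw [lintegral_ball_rpow d hd α R, lintegral_Ioo_rpow_eq_top (by linarith) hR,
    ENNReal.mul_top]
  rw [Measure.toSphere_apply_univ]
  refine mul_ne_zero ?_ (measure_ball_pos _ _ one_pos).ne'
  simp [finrank_euclideanSpace_fin]
  omega

theorem norm_split (d : ℕ) (x : Spc d) :
    ‖x‖ = Real.sqrt (normPrime d x ^ 2 + xLast d x ^ 2) := by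
  rw [EuclideanSpace.norm_eq]
  congr 1
  rw [normPrime, Real.sq_sqrt (by positivity), Fin.sum_univ_castSucc]
  simp [xLast, sq_abs, Real.norm_eq_abs]

theorem lintegral_split (d : ℕ) (G : ℝ → ℝ → ℝ≥0∞)
    (hG : Measurable fun p : ℝ × ℝ => G p.1 p.2) :
    ∫⁻ x, G (normPrime d x) (xLast d x) ∂(volume : Measure (Spc d)) =
      ∫⁻ t : ℝ, ∫⁻ y : EuclideanSpace ℝ (Fin d), G ‖y‖ t ∂volume ∂volume := by
  have hsum : ∀ m : ℕ, Measurable fun f : Fin m → ℝ => Real.sqrt (∑ i, f i ^ 2) :=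
    fun m => (Finset.measurable_sum Finset.univ
      (fun i _ => (measurable_pi_apply i).pow_const 2)).sqrt
  set g1 : (Fin (d+1) → ℝ) → ℝ≥0∞ :=
    fun f => G (Real.sqrt (∑ i : Fin d, f i.castSucc ^ 2)) (f (Fin.last d)) with hg1def
  have hg1 : Measurable g1 := by
    refine hG.comp (Measurable.prodMk ?_ (measurable_pi_apply _))
    exact (Finset.measurable_sum Finset.univ
      (fun i _ => (measurable_pi_apply (Fin.castSucc i)).pow_const 2)).sqrt
  set g2 : ℝ × (Fin d → ℝ) → ℝ≥0∞ :=
    fun p => G (Real.sqrt (∑ i : Fin d, p.2 i ^ 2)) p.1 with hg2def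
  have hg2 : Measurable g2 :=
    hG.comp (Measurable.prodMk ((hsum d).comp measurable_snd) measurable_fst)
  have step1 : ∫⁻ x, G (normPrime d x) (xLast d x) ∂(volume : Measure (Spc d)) =
      ∫⁻ f : Fin (d+1) → ℝ, g1 f ∂volume :=
    (EuclideanSpace.volume_preserving_symm_measurableEquiv_toLp (Fin (d+1))).lintegral_comp hg1
  have step2 : ∫⁻ f : Fin (d+1) → ℝ, g1 f ∂volume =
      ∫⁻ p : ℝ × (Fin d → ℝ), g2 p ∂volume := by
    have hmp := (MeasureTheory.volume_preserving_piFinSuccAbove (fun _ : Fin (d+1) => ℝ) (Fin.last d))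
    rw [← hmp.lintegral_comp hg2]
    refine lintegral_congr fun f => ?_
    simp only [hg1def, hg2def, MeasurableEquiv.piFinSuccAbove_apply]
    congr 2
    refine Finset.sum_congr rfl fun i _ => ?_
    show f i.castSucc ^ 2 = f ((Fin.last d).succAbove i) ^ 2
    rw [Fin.succAbove_last]
  have step3 : ∫⁻ p : ℝ × (Fin d → ℝ), g2 p ∂volume =
      ∫⁻ t : ℝ, ∫⁻ z : Fin d → ℝ, g2 (t, z) ∂volume ∂volume := by
    rw [Measure.volume_eq_prod]
    exact lintegral_prod _ hg2.aemeasurable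
  have step4 : ∀ t : ℝ, ∫⁻ z : Fin d → ℝ, g2 (t, z) ∂volume =
      ∫⁻ y : EuclideanSpace ℝ (Fin d), G ‖y‖ t ∂volume := by
    intro t
    have hmp := (EuclideanSpace.volume_preserving_symm_measurableEquiv_toLp (Fin d)).symm
    have hmeas : Measurable fun y : EuclideanSpace ℝ (Fin d) => G ‖y‖ t :=
      hG.comp (measurable_norm.prodMk measurable_const)
    rw [← hmp.lintegral_comp hmeas]
    refine lintegral_congr fun z => ?_
    simp only [hg2def]
    congr 1
    rw [EuclideanSpace.norm_eq]
    congr 1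
    refine Finset.sum_congr rfl fun i _ => ?_
    rw [Real.norm_eq_abs, sq_abs]
    rfl
  rw [step1, step2, step3]
  exact lintegral_congr step4


def Gr (θ₁ θ₂ θ₃ r a t : ℝ) : ℝ≥0∞ :=
  if Real.sqrt (a^2 + t^2) < r then
    ENNReal.ofReal (a ^ θ₁ * Real.sqrt (a^2 + t^2) ^ θ₂ * |t| ^ θ₃) else 0

theorem Gr_meas (θ₁ θ₂ θ₃ r : ℝ) :
    Measurable fun p : ℝ × ℝ => Gr θ₁ θ₂ θ₃ r p.1 p.2 := by
  have hN : Measurable fun p : ℝ × ℝ => Real.sqrt (p.1^2 + p.2^2) :=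
    ((measurable_fst.pow_const 2).add (measurable_snd.pow_const 2)).sqrt
  refine Measurable.ite (hN measurableSet_Iio) ?_ measurable_const
  exact (((measurable_fst.pow measurable_const).mul (hN.pow measurable_const)).mul
    (measurable_snd.abs.pow measurable_const)).ennreal_ofReal

theorem muW_ball (d : ℕ) (θ₁ θ₂ θ₃ r : ℝ) :
    muW d θ₁ θ₂ θ₃ (ball 0 r) =
      ∫⁻ t : ℝ, ∫⁻ y : EuclideanSpace ℝ (Fin d), Gr θ₁ θ₂ θ₃ r ‖y‖ t ∂volume ∂volume := by
  rw [muW, withDensity_apply _ measurableSet_ball, ← lintegral_indicator measurableSet_ball,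
    ← lintegral_split d (Gr θ₁ θ₂ θ₃ r) (Gr_meas θ₁ θ₂ θ₃ r)]
  refine lintegral_congr fun x => ?_
  by_cases h : x ∈ ball (0 : Spc d) r
  · rw [Set.indicator_of_mem h, Gr, if_pos, wt, norm_split]
    rw [← norm_split]
    exact mem_ball_zero_iff.1 h
  · rw [Set.indicator_of_notMem h, Gr, if_neg]
    rw [← norm_split]
    exact fun hc => h (mem_ball_zero_iff.2 hc)

theorem iter_prod {d : ℕ} (f : ℝ → ℝ≥0∞) (g : EuclideanSpace ℝ (Fin d) → ℝ≥0∞)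
    (hf : Measurable f) (hg : Measurable g) :
    ∫⁻ t : ℝ, ∫⁻ y : EuclideanSpace ℝ (Fin d), f t * g y ∂volume ∂volume =
      (∫⁻ t, f t) * ∫⁻ y, g y := by
  have h1 : ∀ t : ℝ, ∫⁻ y : EuclideanSpace ℝ (Fin d), f t * g y ∂volume =
      f t * ∫⁻ y, g y := fun t => lintegral_const_mul (f t) hg
  rw [lintegral_congr h1, lintegral_mul_const _ hf]


theorem abs_le_N (a t : ℝ) : |t| ≤ Real.sqrt (a^2 + t^2) := by
  rw [← Real.sqrt_sq_eq_abs]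
  exact Real.sqrt_le_sqrt (by nlinarith)

theorem le_N (a t : ℝ) (ha : 0 ≤ a) : a ≤ Real.sqrt (a^2 + t^2) := by
  nth_rewrite 1 [← Real.sqrt_sq ha]
  exact Real.sqrt_le_sqrt (by nlinarith)

theorem N_le (a t : ℝ) (ha : 0 ≤ a) : Real.sqrt (a^2 + t^2) ≤ a + |t| := by
  rw [show a + |t| = Real.sqrt ((a + |t|)^2) from (Real.sqrt_sq (by positivity)).symm]
  refine Real.sqrt_le_sqrt ?_
  have := abs_nonneg t
  have := sq_abs t
  nlinarith

theorem muW_ball_lt_top_A (d : ℕ) (hd : 1 ≤ d) {θ₁ θ₂ θ₃ : ℝ}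
    (hθ₁ : -(d:ℝ) < θ₁) (hθ₂ : 0 ≤ θ₂) (hθ₃ : -1 < θ₃) (R : ℝ) :
    muW d θ₁ θ₂ θ₃ (ball 0 R) < ⊤ := by
  haveI := euclid_nontrivial hd
  rw [muW_ball]
  set f : ℝ → ℝ≥0∞ := (Set.Ioo (-R) R).indicator (fun t => ENNReal.ofReal (|t| ^ θ₃)) with hf_def
  set g : EuclideanSpace ℝ (Fin d) → ℝ≥0∞ :=
    fun y => (ball (0 : EuclideanSpace ℝ (Fin d)) R).indicator
      (fun y => ENNReal.ofReal (‖y‖ ^ θ₁)) y * ENNReal.ofReal (R ^ θ₂) with hg_def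
  have hf : Measurable f :=
    ((measurable_abs.pow measurable_const).ennreal_ofReal).indicator measurableSet_Ioo
  have hg : Measurable g :=
    (((measurable_norm.pow measurable_const).ennreal_ofReal).indicator
      measurableSet_ball).mul_const _
  have hbound : ∀ (t : ℝ) (y : EuclideanSpace ℝ (Fin d)),
      Gr θ₁ θ₂ θ₃ R ‖y‖ t ≤ f t * g y := by
    intro t y
    rw [Gr]
    by_cases hlt : Real.sqrt (‖y‖^2 + t^2) < R
    · rw [if_pos hlt]
      have ht' : |t| < R := lt_of_le_of_lt (abs_le_N _ _) hlt
      have hy' : ‖y‖ < R := lt_of_le_of_lt (le_N _ _ (norm_nonneg y)) hlt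
      have htm : t ∈ Set.Ioo (-R) R := by
        constructor <;> [linarith [neg_abs_le t, ht'.le]; linarith [le_abs_self t]]
      rw [hf_def, hg_def]
      beta_reduce
      rw [Set.indicator_of_mem htm, Set.indicator_of_mem (mem_ball_zero_iff.2 hy')]
      have hreal : ‖y‖ ^ θ₁ * Real.sqrt (‖y‖^2 + t^2) ^ θ₂ * |t| ^ θ₃ ≤
          |t| ^ θ₃ * (‖y‖ ^ θ₁ * R ^ θ₂) := by
        have e1 : Real.sqrt (‖y‖^2 + t^2) ^ θ₂ ≤ R ^ θ₂ :=
          Real.rpow_le_rpow (Real.sqrt_nonneg _) hlt.le hθ₂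
        have e2 : ‖y‖ ^ θ₁ * Real.sqrt (‖y‖^2 + t^2) ^ θ₂ * |t| ^ θ₃
            = (‖y‖ ^ θ₁ * |t| ^ θ₃) * Real.sqrt (‖y‖^2 + t^2) ^ θ₂ := by ring
        rw [e2]
        calc (‖y‖ ^ θ₁ * |t| ^ θ₃) * Real.sqrt (‖y‖^2 + t^2) ^ θ₂
            ≤ (‖y‖ ^ θ₁ * |t| ^ θ₃) * R ^ θ₂ := by
              refine mul_le_mul_of_nonneg_left e1 ?_
              have := Real.rpow_nonneg (norm_nonneg y) θ₁
              have := Real.rpow_nonneg (abs_nonneg t) θ₃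
              positivity
          _ = |t| ^ θ₃ * (‖y‖ ^ θ₁ * R ^ θ₂) := by ring
      calc ENNReal.ofReal (‖y‖ ^ θ₁ * Real.sqrt (‖y‖^2 + t^2) ^ θ₂ * |t| ^ θ₃)
          ≤ ENNReal.ofReal (|t| ^ θ₃ * (‖y‖ ^ θ₁ * R ^ θ₂)) := ENNReal.ofReal_le_ofReal hreal
        _ = ENNReal.ofReal (|t| ^ θ₃) * (ENNReal.ofReal (‖y‖ ^ θ₁) * ENNReal.ofReal (R ^ θ₂)) := by
            rw [ENNReal.ofReal_mul (Real.rpow_nonneg (abs_nonneg t) _),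
              ENNReal.ofReal_mul (Real.rpow_nonneg (norm_nonneg y) _)]
        _ = _ := rfl
    · rw [if_neg hlt]; exact zero_le
  calc ∫⁻ t : ℝ, ∫⁻ y : EuclideanSpace ℝ (Fin d), Gr θ₁ θ₂ θ₃ R ‖y‖ t ∂volume ∂volume
      ≤ ∫⁻ t : ℝ, ∫⁻ y : EuclideanSpace ℝ (Fin d), f t * g y ∂volume ∂volume :=
        lintegral_mono fun t => lintegral_mono fun y => hbound t y
    _ = (∫⁻ t, f t) * ∫⁻ y, g y := iter_prod f g hf hg
    _ < ⊤ := by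
        refine ENNReal.mul_lt_top ?_ ?_
        · rw [hf_def, lintegral_indicator measurableSet_Ioo]
          exact lintegral_Ioo_abs_lt_top hθ₃ R
        · rw [hg_def, lintegral_mul_const _ (((measurable_norm.pow
            measurable_const).ennreal_ofReal).indicator measurableSet_ball),
            lintegral_indicator measurableSet_ball]
          exact ENNReal.mul_lt_top (lintegral_ball_rpow_lt_top hd hθ₁ R) ENNReal.ofReal_lt_top


theorem muW_ball_lt_top_B (d : ℕ) (hd : 1 ≤ d) {θ₁ θ₂ θ₃ : ℝ}
    (hθ₁ : -(d:ℝ) < θ₁) (hθ₂ : θ₂ < 0) (hθ₃ : -1 < θ₃)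
    (hσ : -((d:ℝ)+1) < θ₁ + θ₂ + θ₃) (R : ℝ) :
    muW d θ₁ θ₂ θ₃ (ball 0 R) < ⊤ := by
  haveI := euclid_nontrivial hd
  rw [muW_ball]
  set σ := θ₁ + θ₂ + θ₃ with hσdef
  set ε := min (θ₃ + 1) ((σ + d + 1)/2) with hεdef
  set ε' := min (θ₁ + d) ((σ + d + 1)/2) with hε'def
  have hε0 : 0 < ε := lt_min (by linarith) (by linarith)
  have hε1 : ε ≤ θ₃ + 1 := min_le_left _ _
  have hε2 : ε < σ + d + 1 := lt_of_le_of_lt (min_le_right _ _) (by linarith)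
  have hε'0 : 0 < ε' := lt_min (by linarith) (by linarith)
  have hε'1 : ε' ≤ θ₁ + d := min_le_left _ _
  have hε'2 : ε' < σ + d + 1 := lt_of_le_of_lt (min_le_right _ _) (by linarith)
  set f₁ : ℝ → ℝ≥0∞ := (Set.Ioo (-R) R).indicator (fun t => ENNReal.ofReal (|t| ^ (ε - 1)))
    with hf₁def
  set g₁ : EuclideanSpace ℝ (Fin d) → ℝ≥0∞ :=
    (ball (0 : EuclideanSpace ℝ (Fin d)) R).indicator
      (fun y => ENNReal.ofReal (‖y‖ ^ (σ + 1 - ε))) with hg₁def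
  set f₂ : ℝ → ℝ≥0∞ := (Set.Ioo (-R) R).indicator
    (fun t => ENNReal.ofReal (|t| ^ (σ + d - ε'))) with hf₂def
  set g₂ : EuclideanSpace ℝ (Fin d) → ℝ≥0∞ :=
    (ball (0 : EuclideanSpace ℝ (Fin d)) R).indicator
      (fun y => ENNReal.ofReal (‖y‖ ^ (ε' - d))) with hg₂def
  have hf₁ : Measurable f₁ :=
    ((measurable_abs.pow measurable_const).ennreal_ofReal).indicator measurableSet_Ioo
  have hf₂ : Measurable f₂ :=
    ((measurable_abs.pow measurable_const).ennreal_ofReal).indicator measurableSet_Ioo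
  have hg₁ : Measurable g₁ :=
    ((measurable_norm.pow measurable_const).ennreal_ofReal).indicator measurableSet_ball
  have hg₂ : Measurable g₂ :=
    ((measurable_norm.pow measurable_const).ennreal_ofReal).indicator measurableSet_ball
  have hbound : ∀ t : ℝ, t ≠ 0 → ∀ y : EuclideanSpace ℝ (Fin d), y ≠ 0 →
      Gr θ₁ θ₂ θ₃ R ‖y‖ t ≤ f₁ t * g₁ y + f₂ t * g₂ y := by
    intro t ht y hy
    rw [Gr]
    by_cases hlt : Real.sqrt (‖y‖^2 + t^2) < R
    swap
    · rw [if_neg hlt]; exact zero_le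
    rw [if_pos hlt]
    have ht0 : 0 < |t| := abs_pos.2 ht
    have hy0 : (0:ℝ) < ‖y‖ := norm_pos_iff.2 hy
    have ht' : |t| < R := lt_of_le_of_lt (abs_le_N _ _) hlt
    have hy' : ‖y‖ < R := lt_of_le_of_lt (le_N _ _ (norm_nonneg y)) hlt
    have htm : t ∈ Set.Ioo (-R) R := by
      constructor <;> [linarith [neg_abs_le t, ht'.le]; linarith [le_abs_self t]]
    have hym : y ∈ ball (0 : EuclideanSpace ℝ (Fin d)) R := mem_ball_zero_iff.2 hy'
    rw [hf₁def, hg₁def, hf₂def, hg₂def, Set.indicator_of_mem htm, Set.indicator_of_mem hym,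
      Set.indicator_of_mem htm, Set.indicator_of_mem hym]
    rcases le_or_gt (|t|) ‖y‖ with hcase | hcase
    · refine le_trans ?_ (le_add_right le_rfl)
      rw [← ENNReal.ofReal_mul (Real.rpow_nonneg (abs_nonneg t) _)]
      refine ENNReal.ofReal_le_ofReal ?_
      have e1 : Real.sqrt (‖y‖^2 + t^2) ^ θ₂ ≤ ‖y‖ ^ θ₂ :=
        Real.rpow_le_rpow_of_nonpos hy0 (le_N _ _ (norm_nonneg y)) hθ₂.le
      have e2 : |t| ^ (θ₃ + 1 - ε) ≤ ‖y‖ ^ (θ₃ + 1 - ε) :=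
        Real.rpow_le_rpow (abs_nonneg t) hcase (by linarith)
      have e0 : |t| ^ θ₃ = |t| ^ (ε - 1) * |t| ^ (θ₃ + 1 - ε) := by
        rw [← Real.rpow_add ht0]; congr 1; ring
      calc ‖y‖ ^ θ₁ * Real.sqrt (‖y‖^2 + t^2) ^ θ₂ * |t| ^ θ₃
          = |t| ^ (ε - 1) * (‖y‖ ^ θ₁ * Real.sqrt (‖y‖^2 + t^2) ^ θ₂ * |t| ^ (θ₃ + 1 - ε)) := by
            rw [e0]; ring
        _ ≤ |t| ^ (ε - 1) * (‖y‖ ^ θ₁ * ‖y‖ ^ θ₂ * ‖y‖ ^ (θ₃ + 1 - ε)) := by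
            refine mul_le_mul_of_nonneg_left ?_ (Real.rpow_nonneg (abs_nonneg t) _)
            refine mul_le_mul (mul_le_mul_of_nonneg_left e1 (Real.rpow_nonneg hy0.le _))
              e2 (Real.rpow_nonneg (abs_nonneg t) _) ?_
            have := Real.rpow_nonneg hy0.le θ₂
            have := Real.rpow_nonneg hy0.le θ₁
            positivity
        _ = |t| ^ (ε - 1) * ‖y‖ ^ (σ + 1 - ε) := by
            rw [← Real.rpow_add hy0, ← Real.rpow_add hy0]
            congr 1
            rw [hσdef]; ring
    · refine le_trans ?_ (le_add_left le_rfl)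
      rw [← ENNReal.ofReal_mul (Real.rpow_nonneg (abs_nonneg t) _)]
      refine ENNReal.ofReal_le_ofReal ?_
      have e1 : Real.sqrt (‖y‖^2 + t^2) ^ θ₂ ≤ |t| ^ θ₂ :=
        Real.rpow_le_rpow_of_nonpos ht0 (abs_le_N _ _) hθ₂.le
      have e2 : ‖y‖ ^ (θ₁ + d - ε') ≤ |t| ^ (θ₁ + d - ε') :=
        Real.rpow_le_rpow (norm_nonneg y) hcase.le (by linarith)
      have e0 : ‖y‖ ^ θ₁ = ‖y‖ ^ (ε' - d) * ‖y‖ ^ (θ₁ + d - ε') := by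
        rw [← Real.rpow_add hy0]; congr 1; ring
      calc ‖y‖ ^ θ₁ * Real.sqrt (‖y‖^2 + t^2) ^ θ₂ * |t| ^ θ₃
          = ‖y‖ ^ (ε' - d) *
              (‖y‖ ^ (θ₁ + d - ε') * Real.sqrt (‖y‖^2 + t^2) ^ θ₂ * |t| ^ θ₃) := by
            rw [e0]; ring
        _ ≤ ‖y‖ ^ (ε' - d) * (|t| ^ (θ₁ + d - ε') * |t| ^ θ₂ * |t| ^ θ₃) := by
            refine mul_le_mul_of_nonneg_left ?_ (Real.rpow_nonneg hy0.le _)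
            refine mul_le_mul (mul_le_mul e2 e1
              (Real.rpow_nonneg (Real.sqrt_nonneg _) _) (Real.rpow_nonneg (abs_nonneg t) _))
              le_rfl (Real.rpow_nonneg (abs_nonneg t) _) ?_
            have := Real.rpow_nonneg ht0.le (θ₁ + d - ε')
            have := Real.rpow_nonneg ht0.le θ₂
            positivity
        _ = |t| ^ (σ + d - ε') * ‖y‖ ^ (ε' - d) := by
            rw [← Real.rpow_add ht0, ← Real.rpow_add ht0]
            rw [mul_comm]
            congr 1
            rw [hσdef]; ring
  have haet : ∀ᵐ t : ℝ ∂volume, t ≠ 0 := by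
    have := (Set.countable_singleton (0:ℝ)).ae_notMem (volume : Measure ℝ)
    exact this.mono fun t h => by simpa using h
  have haey : ∀ᵐ y : EuclideanSpace ℝ (Fin d) ∂volume, y ≠ 0 := by
    have := (Set.countable_singleton (0:EuclideanSpace ℝ (Fin d))).ae_notMem
      (volume : Measure (EuclideanSpace ℝ (Fin d)))
    exact this.mono fun y h => by simpa using h
  calc ∫⁻ t : ℝ, ∫⁻ y : EuclideanSpace ℝ (Fin d), Gr θ₁ θ₂ θ₃ R ‖y‖ t ∂volume ∂volume
      ≤ ∫⁻ t : ℝ, ∫⁻ y : EuclideanSpace ℝ (Fin d), (f₁ t * g₁ y + f₂ t * g₂ y) ∂volume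
          ∂volume := by
        refine lintegral_mono_ae (haet.mono fun t ht => ?_)
        exact lintegral_mono_ae (haey.mono fun y hy => hbound t ht y hy)
    _ ≤ ∫⁻ t : ℝ, ∫⁻ y : EuclideanSpace ℝ (Fin d),
          (f₁ t + f₂ t) * (g₁ y + g₂ y) ∂volume ∂volume := by
        refine lintegral_mono fun t => lintegral_mono fun y => ?_
        rw [add_mul, mul_add, mul_add]
        calc f₁ t * g₁ y + f₂ t * g₂ y
            ≤ (f₁ t * g₁ y + f₁ t * g₂ y) + (f₂ t * g₁ y + f₂ t * g₂ y) := by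
              gcongr <;> simp
          _ = _ := rfl
    _ = (∫⁻ t, (f₁ t + f₂ t)) * ∫⁻ y, (g₁ y + g₂ y) :=
        iter_prod _ _ (hf₁.add hf₂) (hg₁.add hg₂)
    _ < ⊤ := by
        rw [lintegral_add_left hf₁, lintegral_add_left hg₁]
        refine ENNReal.mul_lt_top (ENNReal.add_lt_top.2 ⟨?_, ?_⟩)
          (ENNReal.add_lt_top.2 ⟨?_, ?_⟩)
        · rw [hf₁def, lintegral_indicator measurableSet_Ioo]
          exact lintegral_Ioo_abs_lt_top (by linarith) R
        · rw [hf₂def, lintegral_indicator measurableSet_Ioo]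
          exact lintegral_Ioo_abs_lt_top (by linarith) R
        · rw [hg₁def, lintegral_indicator measurableSet_ball]
          exact lintegral_ball_rpow_lt_top hd (by linarith) R
        · rw [hg₂def, lintegral_indicator measurableSet_ball]
          exact lintegral_ball_rpow_lt_top hd (by linarith) R

theorem muW_ball_lt_top (d : ℕ) (hd : 1 ≤ d) {θ₁ θ₂ θ₃ : ℝ}
    (h : inA (d+1) θ₁ θ₂ θ₃ ∨ inB (d+1) θ₁ θ₂ θ₃) (R : ℝ) :
    muW d θ₁ θ₂ θ₃ (ball 0 R) < ⊤ := by
  have hθ₁ : -(d:ℝ) < θ₁ := by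
    rcases h with h | h <;> · have := h.1; push_cast at this; linarith
  have hθ₃ : -1 < θ₃ := by
    rcases h with h | h
    exacts [h.2.2, h.2.2.1]
  rcases le_or_gt 0 θ₂ with hθ₂ | hθ₂
  · exact muW_ball_lt_top_A d hd hθ₁ hθ₂ hθ₃ R
  · rcases h with h | h
    · exact absurd h.2.1 (not_le.2 hθ₂)
    · have hσ : -((d:ℝ)+1) < θ₁ + θ₂ + θ₃ := by
        have := h.2.2.2; push_cast at this; linarith
      exact muW_ball_lt_top_B d hd hθ₁ hθ₂ hθ₃ hσ R


theorem top_case1 (d : ℕ) (hd : 1 ≤ d) {θ₁ θ₂ θ₃ : ℝ} (h1 : θ₁ ≤ -(d:ℝ)) {r : ℝ} (hr : 0 < r) :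
    muW d θ₁ θ₂ θ₃ (ball 0 r) = ⊤ := by
  haveI := euclid_nontrivial hd
  rw [muW_ball, eq_top_iff]
  set c2 := min ((r/4) ^ θ₂) (r ^ θ₂) with hc2def
  set c3 := min ((r/4) ^ θ₃) ((r/2) ^ θ₃) with hc3def
  have hc2 : 0 < c2 := lt_min (Real.rpow_pos_of_pos (by linarith) _)
    (Real.rpow_pos_of_pos hr _)
  have hc3 : 0 < c3 := lt_min (Real.rpow_pos_of_pos (by linarith) _)
    (Real.rpow_pos_of_pos (by linarith) _)
  set f : ℝ → ℝ≥0∞ := (Set.Ioo (r/4) (r/2)).indicator (fun _ => (1:ℝ≥0∞)) with hfdef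
  set g : EuclideanSpace ℝ (Fin d) → ℝ≥0∞ :=
    fun y => (ball (0 : EuclideanSpace ℝ (Fin d)) (r/4)).indicator
      (fun y => ENNReal.ofReal (‖y‖ ^ θ₁)) y * ENNReal.ofReal (c2 * c3) with hgdef
  have hf : Measurable f := measurable_const.indicator measurableSet_Ioo
  have hg : Measurable g :=
    (((measurable_norm.pow measurable_const).ennreal_ofReal).indicator measurableSet_ball).mul_const _
  have hbound : ∀ (t : ℝ) (y : EuclideanSpace ℝ (Fin d)),
      f t * g y ≤ Gr θ₁ θ₂ θ₃ r ‖y‖ t := by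
    intro t y
    by_cases htm : t ∈ Set.Ioo (r/4) (r/2)
    swap
    · rw [hfdef]; rw [Set.indicator_of_notMem htm, zero_mul]; exact zero_le
    by_cases hym : y ∈ ball (0 : EuclideanSpace ℝ (Fin d)) (r/4)
    swap
    · rw [hgdef]; beta_reduce; rw [Set.indicator_of_notMem hym, zero_mul, mul_zero]
      exact zero_le
    have ht1 : r/4 < t := htm.1
    have ht2 : t < r/2 := htm.2
    have ht0 : 0 < t := lt_trans (by linarith) ht1
    have hy : ‖y‖ < r/4 := mem_ball_zero_iff.1 hym
    have habs : |t| = t := abs_of_pos ht0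
    have hNhigh : Real.sqrt (‖y‖^2 + t^2) < r := by
      refine lt_of_le_of_lt (N_le _ _ (norm_nonneg y)) ?_
      rw [habs]; linarith
    have hNlow : r/4 < Real.sqrt (‖y‖^2 + t^2) := by
      refine lt_of_lt_of_le ?_ (abs_le_N ‖y‖ t)
      rw [habs]; exact ht1
    rw [hfdef, hgdef]; beta_reduce
    rw [Set.indicator_of_mem htm, Set.indicator_of_mem hym, one_mul, Gr, if_pos hNhigh,
      ← ENNReal.ofReal_mul (Real.rpow_nonneg (norm_nonneg y) _)]
    refine ENNReal.ofReal_le_ofReal ?_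
    have hc2N : c2 ≤ Real.sqrt (‖y‖^2 + t^2) ^ θ₂ := by
      rcases le_or_gt 0 θ₂ with hs | hs
      · exact le_trans (min_le_left _ _)
          (Real.rpow_le_rpow (by linarith) hNlow.le hs)
      · exact le_trans (min_le_right _ _)
          (Real.rpow_le_rpow_of_nonpos (lt_trans (by linarith) hNlow) hNhigh.le hs.le)
    have hc3t : c3 ≤ |t| ^ θ₃ := by
      rw [habs]
      rcases le_or_gt 0 θ₃ with hs | hs
      · exact le_trans (min_le_left _ _) (Real.rpow_le_rpow (by linarith) ht1.le hs)
      · exact le_trans (min_le_right _ _)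
          (Real.rpow_le_rpow_of_nonpos ht0 ht2.le hs.le)
    have p1 : (0:ℝ) ≤ ‖y‖ ^ θ₁ := Real.rpow_nonneg (norm_nonneg y) _
    calc ‖y‖ ^ θ₁ * (c2 * c3) = ‖y‖ ^ θ₁ * c2 * c3 := by ring
      _ ≤ ‖y‖ ^ θ₁ * Real.sqrt (‖y‖^2 + t^2) ^ θ₂ * |t| ^ θ₃ := by
          refine mul_le_mul (mul_le_mul_of_nonneg_left hc2N p1) hc3t hc3.le ?_
          have := Real.rpow_nonneg (Real.sqrt_nonneg (‖y‖^2 + t^2)) θ₂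
          positivity
  calc (⊤:ℝ≥0∞) = (∫⁻ t, f t) * ∫⁻ y, g y := by
        rw [hfdef, hgdef,
          lintegral_indicator measurableSet_Ioo,
          lintegral_mul_const _ (((measurable_norm.pow
            measurable_const).ennreal_ofReal).indicator measurableSet_ball),
          lintegral_indicator measurableSet_ball,
          lintegral_ball_rpow_eq_top hd h1 (by linarith : (0:ℝ) < r/4)]
        rw [setLIntegral_one, Real.volume_Ioo,
          ENNReal.top_mul (ENNReal.ofReal_pos.2 (mul_pos hc2 hc3)).ne',
          ENNReal.mul_top (ENNReal.ofReal_pos.2 (by linarith : (0:ℝ) < r/2 - r/4)).ne']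
    _ ≤ ∫⁻ t : ℝ, ∫⁻ y : EuclideanSpace ℝ (Fin d), Gr θ₁ θ₂ θ₃ r ‖y‖ t ∂volume ∂volume := by
        rw [← iter_prod f g hf hg]
        exact lintegral_mono fun t => lintegral_mono fun y => hbound t y

theorem top_case2 (d : ℕ) (hd : 1 ≤ d) {θ₁ θ₂ θ₃ : ℝ} (h3 : θ₃ ≤ -1) {r : ℝ} (hr : 0 < r) :
    muW d θ₁ θ₂ θ₃ (ball 0 r) = ⊤ := by
  haveI := euclid_nontrivial hd
  rw [muW_ball, eq_top_iff]
  set c1 := min ((r/4) ^ θ₁) ((r/2) ^ θ₁) with hc1def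
  set c2 := min ((r/4) ^ θ₂) (r ^ θ₂) with hc2def
  have hc1 : 0 < c1 := lt_min (Real.rpow_pos_of_pos (by linarith) _)
    (Real.rpow_pos_of_pos (by linarith) _)
  have hc2 : 0 < c2 := lt_min (Real.rpow_pos_of_pos (by linarith) _)
    (Real.rpow_pos_of_pos hr _)
  set A : Set (EuclideanSpace ℝ (Fin d)) := (fun y => ‖y‖) ⁻¹' Set.Ioo (r/4) (r/2) with hAdef
  have hAopen : IsOpen A := isOpen_Ioo.preimage continuous_norm
  have hAmeas : MeasurableSet A := hAopen.measurableSet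
  have hAne : A.Nonempty := by
    obtain ⟨y, hy⟩ := exists_norm_eq (EuclideanSpace ℝ (Fin d)) (by linarith : (0:ℝ) ≤ 3*r/8)
    refine ⟨y, ?_⟩
    rw [hAdef, Set.mem_preimage, hy]
    constructor <;> · show _ < _; linarith
  set f : ℝ → ℝ≥0∞ := (Set.Ioo (0:ℝ) (r/4)).indicator
    (fun t => ENNReal.ofReal (|t| ^ θ₃)) with hfdef
  set g : EuclideanSpace ℝ (Fin d) → ℝ≥0∞ :=
    A.indicator (fun _ => ENNReal.ofReal (c1 * c2)) with hgdef
  have hf : Measurable f :=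
    ((measurable_abs.pow measurable_const).ennreal_ofReal).indicator measurableSet_Ioo
  have hg : Measurable g := measurable_const.indicator hAmeas
  have hbound : ∀ (t : ℝ) (y : EuclideanSpace ℝ (Fin d)),
      f t * g y ≤ Gr θ₁ θ₂ θ₃ r ‖y‖ t := by
    intro t y
    by_cases htm : t ∈ Set.Ioo (0:ℝ) (r/4)
    swap
    · rw [hfdef, Set.indicator_of_notMem htm, zero_mul]; exact zero_le
    by_cases hym : y ∈ A
    swap
    · rw [hgdef, Set.indicator_of_notMem hym, mul_zero]; exact zero_le
    have ht0 : 0 < t := htm.1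
    have ht2 : t < r/4 := htm.2
    have hy1 : r/4 < ‖y‖ := hym.1
    have hy2 : ‖y‖ < r/2 := hym.2
    have habs : |t| = t := abs_of_pos ht0
    have hNhigh : Real.sqrt (‖y‖^2 + t^2) < r := by
      refine lt_of_le_of_lt (N_le _ _ (norm_nonneg y)) ?_
      rw [habs]; linarith
    have hNlow : r/4 < Real.sqrt (‖y‖^2 + t^2) :=
      lt_of_lt_of_le hy1 (le_N _ _ (norm_nonneg y))
    rw [hfdef, hgdef, Set.indicator_of_mem htm, Set.indicator_of_mem hym, Gr, if_pos hNhigh,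
      ← ENNReal.ofReal_mul (Real.rpow_nonneg (abs_nonneg t) _)]
    refine ENNReal.ofReal_le_ofReal ?_
    have hc1y : c1 ≤ ‖y‖ ^ θ₁ := by
      rcases le_or_gt 0 θ₁ with hs | hs
      · exact le_trans (min_le_left _ _) (Real.rpow_le_rpow (by linarith) hy1.le hs)
      · exact le_trans (min_le_right _ _)
          (Real.rpow_le_rpow_of_nonpos (by linarith) hy2.le hs.le)
    have hc2N : c2 ≤ Real.sqrt (‖y‖^2 + t^2) ^ θ₂ := by
      rcases le_or_gt 0 θ₂ with hs | hs
      · exact le_trans (min_le_left _ _) (Real.rpow_le_rpow (by linarith) hNlow.le hs)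
      · exact le_trans (min_le_right _ _)
          (Real.rpow_le_rpow_of_nonpos (lt_trans (by linarith) hNlow) hNhigh.le hs.le)
    have p3 : (0:ℝ) ≤ |t| ^ θ₃ := Real.rpow_nonneg (abs_nonneg t) _
    calc |t| ^ θ₃ * (c1 * c2) = c1 * c2 * |t| ^ θ₃ := by ring
      _ ≤ ‖y‖ ^ θ₁ * Real.sqrt (‖y‖^2 + t^2) ^ θ₂ * |t| ^ θ₃ := by
          refine mul_le_mul_of_nonneg_right ?_ p3
          exact mul_le_mul hc1y hc2N hc2.le (Real.rpow_nonneg (norm_nonneg y) _)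
  calc (⊤:ℝ≥0∞) = (∫⁻ t, f t) * ∫⁻ y, g y := by
        rw [hfdef, hgdef, lintegral_indicator measurableSet_Ioo, lintegral_indicator hAmeas]
        have heq : ∫⁻ t in Set.Ioo (0:ℝ) (r/4), ENNReal.ofReal (|t| ^ θ₃)
            = ∫⁻ t in Set.Ioo (0:ℝ) (r/4), ENNReal.ofReal (t ^ θ₃) := by
          refine setLIntegral_congr_fun measurableSet_Ioo ?_
          intro t ht; beta_reduce; rw [abs_of_pos ht.1]
        rw [heq, lintegral_Ioo_rpow_eq_top h3 (by linarith : (0:ℝ) < r/4),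
          setLIntegral_const, ENNReal.top_mul]
        refine mul_ne_zero (ENNReal.ofReal_pos.2 (mul_pos hc1 hc2)).ne' ?_
        exact (hAopen.measure_pos volume hAne).ne'
    _ ≤ ∫⁻ t : ℝ, ∫⁻ y : EuclideanSpace ℝ (Fin d), Gr θ₁ θ₂ θ₃ r ‖y‖ t ∂volume ∂volume := by
        rw [← iter_prod f g hf hg]
        exact lintegral_mono fun t => lintegral_mono fun y => hbound t y


theorem top_case3 (d : ℕ) (hd : 1 ≤ d) {θ₁ θ₂ θ₃ : ℝ} (hθ₂ : θ₂ < 0) (hθ₃ : -1 < θ₃)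
    (hσ : θ₁ + θ₂ + θ₃ ≤ -((d:ℝ)+1)) {r : ℝ} (hr : 0 < r) :
    muW d θ₁ θ₂ θ₃ (ball 0 r) = ⊤ := by
  haveI := euclid_nontrivial hd
  set m := min ((1/2:ℝ) ^ θ₃) 1 with hmdef
  have hm0 : 0 < m := lt_min (Real.rpow_pos_of_pos one_half_pos _) one_pos
  have hm1 : m ≤ 1 := min_le_right _ _
  set K := (2:ℝ) ^ θ₂ * m with hKdef
  have hK0 : 0 < K := mul_pos (Real.rpow_pos_of_pos two_pos _) hm0
  rw [muW_ball, eq_top_iff]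
  have hswap : ∫⁻ t : ℝ, ∫⁻ y : EuclideanSpace ℝ (Fin d), Gr θ₁ θ₂ θ₃ r ‖y‖ t ∂volume ∂volume
      = ∫⁻ y : EuclideanSpace ℝ (Fin d), ∫⁻ t : ℝ, Gr θ₁ θ₂ θ₃ r ‖y‖ t ∂volume ∂volume := by
    refine lintegral_lintegral_swap ?_
    exact ((Gr_meas θ₁ θ₂ θ₃ r).comp
      ((measurable_norm.comp measurable_snd).prodMk measurable_fst)).aemeasurable
  rw [hswap]
  have key : ∀ y : EuclideanSpace ℝ (Fin d), y ≠ 0 → ‖y‖ < r/4 →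
      ENNReal.ofReal (K/2) * ENNReal.ofReal (‖y‖ ^ (θ₁ + θ₂ + θ₃ + 1)) ≤
        ∫⁻ t : ℝ, Gr θ₁ θ₂ θ₃ r ‖y‖ t ∂volume := by
    intro y hy hyr
    have hy0 : (0:ℝ) < ‖y‖ := norm_pos_iff.2 hy
    have hGrlow : ∀ t ∈ Set.Ioo (‖y‖/2) ‖y‖,
        ENNReal.ofReal (K * ‖y‖ ^ (θ₁ + θ₂ + θ₃)) ≤ Gr θ₁ θ₂ θ₃ r ‖y‖ t := by
      intro t ht
      have ht0 : 0 < t := lt_trans (by linarith) ht.1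
      have habs : |t| = t := abs_of_pos ht0
      have hNhigh : Real.sqrt (‖y‖^2 + t^2) < r := by
        refine lt_of_le_of_lt (N_le _ _ (norm_nonneg y)) ?_
        rw [habs]; linarith [ht.2, hyr]
      have hN2 : Real.sqrt (‖y‖^2 + t^2) ≤ 2 * ‖y‖ := by
        refine le_trans (N_le _ _ (norm_nonneg y)) ?_
        rw [habs]; linarith [ht.2]
      have hN0 : 0 < Real.sqrt (‖y‖^2 + t^2) := lt_of_lt_of_le hy0 (le_N _ _ (norm_nonneg y))
      rw [Gr, if_pos hNhigh]
      refine ENNReal.ofReal_le_ofReal ?_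
      have e2 : (2*‖y‖) ^ θ₂ ≤ Real.sqrt (‖y‖^2 + t^2) ^ θ₂ :=
        Real.rpow_le_rpow_of_nonpos hN0 hN2 hθ₂.le
      have e2' : (2*‖y‖) ^ θ₂ = 2 ^ θ₂ * ‖y‖ ^ θ₂ :=
        Real.mul_rpow (by norm_num) hy0.le
      have e3 : m * ‖y‖ ^ θ₃ ≤ |t| ^ θ₃ := by
        rw [habs]
        rcases le_or_gt 0 θ₃ with hs | hs
        · have : (‖y‖/2) ^ θ₃ ≤ t ^ θ₃ := Real.rpow_le_rpow (by linarith) ht.1.le hs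
          refine le_trans ?_ this
          rw [show ‖y‖/2 = (1/2) * ‖y‖ by ring, Real.mul_rpow (by norm_num) hy0.le]
          exact mul_le_mul_of_nonneg_right (min_le_left _ _) (Real.rpow_nonneg hy0.le _)
        · have : ‖y‖ ^ θ₃ ≤ t ^ θ₃ := Real.rpow_le_rpow_of_nonpos ht0 ht.2.le hs.le
          refine le_trans ?_ this
          nth_rewrite 2 [show ‖y‖ ^ θ₃ = 1 * ‖y‖ ^ θ₃ by ring]
          exact mul_le_mul_of_nonneg_right hm1 (Real.rpow_nonneg hy0.le _)
      calc K * ‖y‖ ^ (θ₁ + θ₂ + θ₃)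
          = ‖y‖ ^ θ₁ * (2 ^ θ₂ * ‖y‖ ^ θ₂) * (m * ‖y‖ ^ θ₃) := by
            rw [hKdef, Real.rpow_add hy0, Real.rpow_add hy0]; ring
        _ = ‖y‖ ^ θ₁ * (2*‖y‖) ^ θ₂ * (m * ‖y‖ ^ θ₃) := by rw [e2']
        _ ≤ ‖y‖ ^ θ₁ * Real.sqrt (‖y‖^2 + t^2) ^ θ₂ * |t| ^ θ₃ := by
            refine mul_le_mul (mul_le_mul_of_nonneg_left e2 (Real.rpow_nonneg hy0.le _)) e3
              (mul_nonneg hm0.le (Real.rpow_nonneg hy0.le _)) ?_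
            have := Real.rpow_nonneg hy0.le θ₁
            have := Real.rpow_nonneg (Real.sqrt_nonneg (‖y‖^2+t^2)) θ₂
            positivity
    calc ENNReal.ofReal (K/2) * ENNReal.ofReal (‖y‖ ^ (θ₁ + θ₂ + θ₃ + 1))
        = ENNReal.ofReal (K * ‖y‖ ^ (θ₁ + θ₂ + θ₃)) * ENNReal.ofReal (‖y‖ - ‖y‖/2) := by
          rw [← ENNReal.ofReal_mul (by positivity), ← ENNReal.ofReal_mul
            (mul_nonneg hK0.le (Real.rpow_nonneg hy0.le _))]
          congr 1
          rw [Real.rpow_add_one hy0.ne']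
          ring
      _ = ∫⁻ t in Set.Ioo (‖y‖/2) ‖y‖,
            ENNReal.ofReal (K * ‖y‖ ^ (θ₁ + θ₂ + θ₃)) ∂volume := by
          rw [setLIntegral_const, Real.volume_Ioo]
      _ ≤ ∫⁻ t in Set.Ioo (‖y‖/2) ‖y‖, Gr θ₁ θ₂ θ₃ r ‖y‖ t ∂volume :=
          setLIntegral_mono' measurableSet_Ioo hGrlow
      _ ≤ ∫⁻ t : ℝ, Gr θ₁ θ₂ θ₃ r ‖y‖ t ∂volume := setLIntegral_le_lintegral _ _
  have haey : ∀ᵐ y : EuclideanSpace ℝ (Fin d) ∂volume, y ≠ 0 := by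
    have := (Set.countable_singleton (0:EuclideanSpace ℝ (Fin d))).ae_notMem
      (volume : Measure (EuclideanSpace ℝ (Fin d)))
    exact this.mono fun y h => by simpa using h
  have hlower : ∫⁻ y : EuclideanSpace ℝ (Fin d),
      (ball (0:EuclideanSpace ℝ (Fin d)) (r/4)).indicator
        (fun y => ENNReal.ofReal (K/2) * ENNReal.ofReal (‖y‖ ^ (θ₁ + θ₂ + θ₃ + 1))) y ∂volume
      ≤ ∫⁻ y : EuclideanSpace ℝ (Fin d), ∫⁻ t : ℝ, Gr θ₁ θ₂ θ₃ r ‖y‖ t ∂volume ∂volume := by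
    refine lintegral_mono_ae (haey.mono fun y hy => ?_)
    by_cases hym : y ∈ ball (0:EuclideanSpace ℝ (Fin d)) (r/4)
    · rw [Set.indicator_of_mem hym]
      exact key y hy (mem_ball_zero_iff.1 hym)
    · rw [Set.indicator_of_notMem hym]; exact zero_le
  refine le_trans (le_of_eq ?_) hlower
  rw [lintegral_indicator measurableSet_ball,
    lintegral_const_mul _ ((measurable_norm.pow measurable_const).ennreal_ofReal),
    lintegral_ball_rpow_eq_top hd (by push_cast; linarith) (by linarith : (0:ℝ) < r/4),
    ENNReal.mul_top (ENNReal.ofReal_pos.2 (by linarith)).ne']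

theorem muW_ball_eq_top (d : ℕ) (hd : 1 ≤ d) {θ₁ θ₂ θ₃ : ℝ}
    (h : ¬(inA (d+1) θ₁ θ₂ θ₃ ∨ inB (d+1) θ₁ θ₂ θ₃)) {r : ℝ} (hr : 0 < r) :
    muW d θ₁ θ₂ θ₃ (ball 0 r) = ⊤ := by
  push_neg at h
  obtain ⟨hA, hB⟩ := h
  rw [inA] at hA
  rw [inB] at hB
  push_neg at hA hB
  have hcast : -(((d:ℕ)+1 : ℕ) : ℝ) + 1 = -(d:ℝ) := by push_cast; ring
  by_cases h1 : θ₁ ≤ -(d:ℝ)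
  · exact top_case1 d hd h1 hr
  push_neg at h1
  by_cases h3 : θ₃ ≤ -1
  · exact top_case2 d hd h3 hr
  push_neg at h3
  have hθ₁' : -(((d+1:ℕ):ℝ) - 1) < θ₁ := by push_cast; linarith
  have hθ₂ : θ₂ < 0 := by
    rcases lt_or_ge θ₂ 0 with h | h
    · exact h
    · exact absurd h3 (by simpa using (hA hθ₁' h))
  have hσ : θ₁ + θ₂ + θ₃ ≤ -((d:ℝ)+1) := by
    have := hB hθ₁' hθ₂ h3
    push_cast at this
    linarith
  exact top_case3 d hd hθ₂ h3 hσ hr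


end AuxLemmas

theorem stmt1 (d : ℕ) (hd : 1 ≤ d) (θ₁ θ₂ θ₃ : ℝ) :
    (¬(inA (d + 1) θ₁ θ₂ θ₃ ∨ inB (d + 1) θ₁ θ₂ θ₃) →
      ∀ r : ℝ, 0 < r → muW d θ₁ θ₂ θ₃ (ball 0 r) = ⊤) ∧
    (IsLocallyFiniteMeasure (muW d θ₁ θ₂ θ₃) ↔ (inA (d + 1) θ₁ θ₂ θ₃ ∨ inB (d + 1) θ₁ θ₂ θ₃)) := by
  constructor
  · intro h r hr
    exact muW_ball_eq_top d hd h hr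
  · constructor
    · intro hloc
      by_contra h
      haveI := hloc
      obtain ⟨s, hs, hfin⟩ := (muW d θ₁ θ₂ θ₃).finiteAt_nhds (0 : Spc d)
      obtain ⟨ε, hε, hsub⟩ := Metric.mem_nhds_iff.1 hs
      have : muW d θ₁ θ₂ θ₃ (ball 0 ε) = ⊤ := muW_ball_eq_top d hd h hε
      exact absurd (lt_of_le_of_lt (measure_mono hsub) hfin) (by rw [this]; simp)
    · intro h
      refine ⟨fun x => ⟨ball x 1, ball_mem_nhds x one_pos, ?_⟩⟩
      refine lt_of_le_of_lt (measure_mono ?_) (muW_ball_lt_top d hd h (1 + ‖x‖))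
      refine ball_subset_ball' ?_
      rw [dist_zero_right]

end Aniso
end
end

section
/- Let 1 < p < ∞ and suppose (θ1,θ2,θ3) ∉ (𝒜 ∪ ℬ) ∩ (𝒞_p ∪ 𝒟_p). Then w is not an A_p weight: the supremum over all balls B ⊂ ℝ^n of ((1/|B|)∫_B w dx) · ((1/|B|)∫_B w^{−1/(p−1)} dx)^{p−1} is infinite, where the expression is interpreted as +∞ whenever one of the two integrals diverges. -/
open MeasureTheory Metric ENNReal RealInnerProductSpace Pointwise

noncomputable section


namespace Aniso

section Aux

variable {d : ℕ}

lemma normPrime_nonneg (x : Spc d) : 0 ≤ normPrime d x := Real.sqrt_nonneg _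

lemma norm_sq_eq (x : Spc d) : ‖x‖ ^ 2 = normPrime d x ^ 2 + xLast d x ^ 2 := by
  rw [EuclideanSpace.norm_eq, Real.sq_sqrt (by positivity), normPrime,
    Real.sq_sqrt (by positivity), xLast, Fin.sum_univ_castSucc]
  simp [sq_abs]

lemma abs_xLast_le_norm (x : Spc d) : |xLast d x| ≤ ‖x‖ := by
  nlinarith [norm_sq_eq x, sq_abs (xLast d x), sq_nonneg (normPrime d x),
    norm_nonneg x, abs_nonneg (xLast d x)]

lemma normPrime_le_norm (x : Spc d) : normPrime d x ≤ ‖x‖ := by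
  nlinarith [norm_sq_eq x, sq_nonneg (xLast d x), norm_nonneg x, normPrime_nonneg x]

lemma norm_le_of {x : Spc d} {a b c : ℝ} (h1 : normPrime d x ≤ a) (h2 : |xLast d x| ≤ b)
    (h3 : a ^ 2 + b ^ 2 ≤ c ^ 2) (hc : 0 ≤ c) : ‖x‖ ≤ c := by
  nlinarith [norm_sq_eq x, sq_abs (xLast d x), norm_nonneg x, normPrime_nonneg x,
    abs_nonneg (xLast d x)]

lemma measurable_coord (i : Fin (d + 1)) : Measurable (fun x : Spc d => x i) :=
  (measurable_pi_apply i).comp (MeasurableEquiv.toLp 2 (Fin (d+1) → ℝ)).symm.measurable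

lemma measurable_normPrime : Measurable (normPrime d) := by
  apply Measurable.sqrt
  exact Finset.measurable_sum _ (fun i _ => ((measurable_coord i.castSucc).pow_const 2))

lemma measurable_xLast : Measurable (xLast d) := measurable_coord (Fin.last d)

lemma measurable_wt (θ₁ θ₂ θ₃ : ℝ) : Measurable (wt d θ₁ θ₂ θ₃) := by
  apply Measurable.mul
  apply Measurable.mul
  · exact measurable_normPrime.pow measurable_const
  · exact measurable_norm.pow measurable_const
  · exact measurable_xLast.abs.pow measurable_const

lemma splitMP :
    MeasurePreserving (fun x : Spc d => ((xLast d x : ℝ), fun j : Fin d => x j.castSucc))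
      volume ((volume : Measure ℝ).prod (volume : Measure (Fin d → ℝ))) := by
  have h1 := EuclideanSpace.volume_preserving_symm_measurableEquiv_toLp (Fin (d+1))
  have h2 := volume_preserving_piFinSuccAbove (fun _ : Fin (d+1) => ℝ) (Fin.last d)
  have h3 := h2.comp h1
  convert h3 using 1
  case e'_3 => rfl
  case e'_7 => rfl
  funext x
  simp [MeasurableEquiv.piFinSuccAbove, MeasurableEquiv.coe_toLp_symm, Fin.init, xLast]
  rfl

lemma volume_split (I J : Set ℝ) (hI : MeasurableSet I) (hJ : MeasurableSet J) :
    volume {x : Spc d | normPrime d x ∈ I ∧ xLast d x ∈ J}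
      = volume J * volume {z : EuclideanSpace ℝ (Fin d) | ‖z‖ ∈ I} := by
  have hKm : MeasurableSet {y : Fin d → ℝ | Real.sqrt (∑ i, y i ^ 2) ∈ I} := by
    apply Measurable.sqrt (Finset.measurable_sum _ (fun i _ => (measurable_pi_apply i).pow_const 2))
    exact hI
  have h1 : {x : Spc d | normPrime d x ∈ I ∧ xLast d x ∈ J}
      = (fun x : Spc d => ((xLast d x : ℝ), fun j : Fin d => x j.castSucc)) ⁻¹'
        (J ×ˢ {y : Fin d → ℝ | Real.sqrt (∑ i, y i ^ 2) ∈ I}) := by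
    ext x
    simp only [Set.mem_setOf_eq, Set.mem_preimage, Set.mem_prod, normPrime]
    tauto
  rw [h1, splitMP.measure_preimage (hJ.prod hKm).nullMeasurableSet, Measure.prod_prod]
  congr 1
  have h2 : {z : EuclideanSpace ℝ (Fin d) | ‖z‖ ∈ I}
      = ((MeasurableEquiv.toLp 2 (Fin d → ℝ)).symm) ⁻¹'
        {y : Fin d → ℝ | Real.sqrt (∑ i, y i ^ 2) ∈ I} := by
    ext z
    simp [EuclideanSpace.norm_eq, MeasurableEquiv.coe_toLp_symm, sq_abs]
  rw [h2,
    (EuclideanSpace.volume_preserving_symm_measurableEquiv_toLp (Fin d)).measure_preimage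
      hKm.nullMeasurableSet]

def shl (d : ℕ) (r : ℝ) : Set (EuclideanSpace ℝ (Fin d)) := {z | ‖z‖ ∈ Set.Ioo (r/2) r}

lemma volume_shl {r : ℝ} (hr : 0 < r) :
    volume (shl d r) = ENNReal.ofReal (r ^ d) * volume (shl d 1) := by
  have h : shl d r = r • shl d 1 := by
    ext z
    rw [Set.mem_smul_set_iff_inv_smul_mem₀ hr.ne']
    simp only [shl, Set.mem_setOf_eq, Set.mem_Ioo, norm_smul, norm_inv, Real.norm_eq_abs,
      abs_of_pos hr]
    have hri : r * r⁻¹ = 1 := mul_inv_cancel₀ hr.ne'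
    have hrip : 0 < r⁻¹ := inv_pos.mpr hr
    constructor <;> rintro ⟨h1, h2⟩ <;> constructor <;> nlinarith
  rw [h, Measure.addHaar_smul, finrank_euclideanSpace_fin, abs_of_pos (pow_pos hr d)]

lemma volume_shl_one_ne_zero (hd1 : 1 ≤ d) : volume (shl d 1) ≠ 0 := by
  have ho : IsOpen (shl d 1) := isOpen_Ioo.preimage continuous_norm
  have hne : (shl d 1).Nonempty := by
    refine ⟨EuclideanSpace.single (⟨0, hd1⟩ : Fin d) (3/4 : ℝ), ?_⟩
    simp [shl, EuclideanSpace.norm_single]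
    norm_num
  exact (ho.measure_pos volume hne).ne'

def P (d : ℕ) (r u v : ℝ) : Set (Spc d) :=
  {x | normPrime d x ∈ Set.Ioo (r/2) r ∧ xLast d x ∈ Set.Ioo u v}

lemma measurableSet_P (r u v : ℝ) : MeasurableSet (P d r u v) := by
  apply MeasurableSet.inter
  · exact measurable_normPrime measurableSet_Ioo
  · exact measurable_xLast measurableSet_Ioo

lemma volume_P {r : ℝ} (hr : 0 < r) (u v : ℝ) :
    volume (P d r u v) = ENNReal.ofReal (v - u) * (ENNReal.ofReal (r ^ d) * volume (shl d 1)) := by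
  rw [P, volume_split _ _ measurableSet_Ioo measurableSet_Ioo, Real.volume_Ioo]
  congr 1
  exact volume_shl hr

lemma rpow_min_le {a b t θ : ℝ} (ha : 0 < a) (hat : a ≤ t) (htb : t ≤ b) :
    min (a ^ θ) (b ^ θ) ≤ t ^ θ := by
  rcases le_or_gt 0 θ with h | h
  · exact le_trans (min_le_left _ _) (Real.rpow_le_rpow ha.le hat h)
  · exact le_trans (min_le_right _ _) (Real.rpow_le_rpow_of_nonpos (ha.trans_le hat) htb h.le)

lemma min_rpow_scale {x c₁ c₂ θ : ℝ} (hx : 0 ≤ x) (hc₁ : 0 ≤ c₁) (hc₂ : 0 ≤ c₂) :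
    x ^ θ * min (c₁ ^ θ) (c₂ ^ θ) ≤ min ((x * c₁) ^ θ) ((x * c₂) ^ θ) := by
  rw [Real.mul_rpow hx hc₁, Real.mul_rpow hx hc₂]
  exact le_min (mul_le_mul_of_nonneg_left (min_le_left _ _) (Real.rpow_nonneg hx _))
    (mul_le_mul_of_nonneg_left (min_le_right _ _) (Real.rpow_nonneg hx _))

lemma wt_ge (θ₁ θ₂ θ₃ : ℝ) {x : Spc d} {a₁ b₁ a₂ b₂ a₃ b₃ : ℝ}
    (ha₁ : 0 < a₁) (ha₂ : 0 < a₂) (ha₃ : 0 < a₃)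
    (h₁ : a₁ ≤ normPrime d x) (h₁' : normPrime d x ≤ b₁)
    (h₂ : a₂ ≤ ‖x‖) (h₂' : ‖x‖ ≤ b₂)
    (h₃ : a₃ ≤ |xLast d x|) (h₃' : |xLast d x| ≤ b₃) :
    min (a₁ ^ θ₁) (b₁ ^ θ₁) * min (a₂ ^ θ₂) (b₂ ^ θ₂) * min (a₃ ^ θ₃) (b₃ ^ θ₃)
      ≤ wt d θ₁ θ₂ θ₃ x := by
  have m1 := rpow_min_le (θ := θ₁) ha₁ h₁ h₁'
  have m2 := rpow_min_le (θ := θ₂) ha₂ h₂ h₂'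
  have m3 := rpow_min_le (θ := θ₃) ha₃ h₃ h₃'
  have p1 : (0:ℝ) < min (a₁ ^ θ₁) (b₁ ^ θ₁) :=
    lt_min (Real.rpow_pos_of_pos ha₁ _) (Real.rpow_pos_of_pos (ha₁.trans_le (h₁.trans h₁')) _)
  have p2 : (0:ℝ) < min (a₂ ^ θ₂) (b₂ ^ θ₂) :=
    lt_min (Real.rpow_pos_of_pos ha₂ _) (Real.rpow_pos_of_pos (ha₂.trans_le (h₂.trans h₂')) _)
  have p3 : (0:ℝ) < min (a₃ ^ θ₃) (b₃ ^ θ₃) :=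
    lt_min (Real.rpow_pos_of_pos ha₃ _) (Real.rpow_pos_of_pos (ha₃.trans_le (h₃.trans h₃')) _)
  unfold wt
  have hnp : (0:ℝ) ≤ normPrime d x ^ θ₁ := Real.rpow_nonneg (normPrime_nonneg x) _
  have hn : (0:ℝ) ≤ ‖x‖ ^ θ₂ := Real.rpow_nonneg (norm_nonneg x) _
  exact mul_le_mul (mul_le_mul m1 m2 p2.le hnp) m3 p3.le (mul_nonneg hnp hn)

lemma setLIntegral_wt_ge (θ₁ θ₂ θ₃ : ℝ) {S : Set (Spc d)} (hS : MeasurableSet S) {m : ℝ}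
    (h : ∀ x ∈ S, m ≤ wt d θ₁ θ₂ θ₃ x) :
    ENNReal.ofReal m * volume S ≤ ∫⁻ x in S, ENNReal.ofReal (wt d θ₁ θ₂ θ₃ x) := by
  calc ENNReal.ofReal m * volume S = ∫⁻ _ in S, ENNReal.ofReal m := (setLIntegral_const _ _).symm
    _ ≤ ∫⁻ x in S, ENNReal.ofReal (wt d θ₁ θ₂ θ₃ x) := by
        apply setLIntegral_mono ((measurable_wt θ₁ θ₂ θ₃).ennreal_ofReal)
        exact fun x hx => ENNReal.ofReal_le_ofReal (h x hx)

lemma div_of_sets (θ₁ θ₂ θ₃ : ℝ) (S : ℕ → Set (Spc d)) (hm : ∀ k, MeasurableSet (S k))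
    (hdisj : Pairwise (Function.onFun Disjoint S)) (hsub : ∀ k, S k ⊆ ball (0 : Spc d) 1)
    (C : ℝ≥0∞) (hC : C ≠ 0)
    (hlb : ∀ k, C ≤ ∫⁻ x in S k, ENNReal.ofReal (wt d θ₁ θ₂ θ₃ x)) :
    ∫⁻ x in ball (0 : Spc d) 1, ENNReal.ofReal (wt d θ₁ θ₂ θ₃ x) = ⊤ := by
  refine top_unique ?_
  calc (⊤ : ℝ≥0∞) = ∑' _ : ℕ, C := (tsum_const_eq_top_of_ne_zero hC).symm
    _ ≤ ∑' k, ∫⁻ x in S k, ENNReal.ofReal (wt d θ₁ θ₂ θ₃ x) := ENNReal.tsum_le_tsum hlb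
    _ = ∫⁻ x in ⋃ k, S k, ENNReal.ofReal (wt d θ₁ θ₂ θ₃ x) := (lintegral_iUnion hm hdisj _).symm
    _ ≤ _ := lintegral_mono_set (Set.iUnion_subset hsub)

/-- dyadic scale -/
def ρ (k : ℕ) : ℝ := (2 : ℝ) ^ (-(k : ℝ) - 1)

lemma ρ_pos (k : ℕ) : 0 < ρ k := Real.rpow_pos_of_pos two_pos _

lemma ρ_le_half (k : ℕ) : ρ k ≤ 1 / 2 := by
  have : ρ k ≤ (2:ℝ) ^ (-1 : ℝ) :=
    Real.rpow_le_rpow_of_exponent_le one_le_two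
      (by have : (0:ℝ) ≤ (k:ℝ) := Nat.cast_nonneg k; linarith)
  rwa [Real.rpow_neg_one, ← one_div] at this

lemma ρ_succ_le (j k : ℕ) (h : j < k) : ρ k ≤ ρ j / 2 := by
  have h2 : ρ j / 2 = (2:ℝ) ^ (-(j:ℝ) - 2) := by
    rw [ρ, div_eq_mul_inv, ← Real.rpow_neg_one 2, ← Real.rpow_add two_pos]
    ring_nf
  rw [h2, ρ]
  apply Real.rpow_le_rpow_of_exponent_le one_le_two
  have : (j:ℝ) + 1 ≤ (k:ℝ) := by exact_mod_cast h
  linarith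

lemma rpow_prod_ge_one {x e : ℝ} (hx : 0 < x) (hx1 : x ≤ 1) (he : e ≤ 0) :
    (1:ℝ) ≤ x ^ e := Real.one_le_rpow_of_pos_of_le_one_of_nonpos hx hx1 he

set_option maxHeartbeats 2000000 in
lemma main_div (hd1 : 1 ≤ d) (θ₁ θ₂ θ₃ : ℝ)
    (hnA : ¬ inA (d + 1) θ₁ θ₂ θ₃) (hnB : ¬ inB (d + 1) θ₁ θ₂ θ₃) :
    ∫⁻ x in ball (0 : Spc d) 1, ENNReal.ofReal (wt d θ₁ θ₂ θ₃ x) = ⊤ := by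
  have hdR : (1:ℝ) ≤ (d:ℝ) := by exact_mod_cast hd1
  rw [inA] at hnA
  rw [inB] at hnB
  push_neg at hnA hnB
  push_cast at hnA hnB
  -- hnA : -((d:ℝ) + 1 - 1) < θ₁ → 0 ≤ θ₂ → θ₃ ≤ -1
  -- hnB : -(d + 1 - 1) < θ₁ → θ₂ < 0 → -1 < θ₃ → θ₁ + θ₂ + θ₃ ≤ -(d + 1)
  by_cases h1 : θ₁ ≤ -(d:ℝ)
  · -- Case 1 : divergence near the axis
    set M₁ := min ((1/2:ℝ) ^ θ₁) ((1:ℝ) ^ θ₁) with hM₁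
    set M₂ := min ((1/2:ℝ) ^ θ₂) ((1:ℝ) ^ θ₂) with hM₂
    set M₃ := min ((1/2:ℝ) ^ θ₃) ((3/4:ℝ) ^ θ₃) with hM₃
    have hM₁p : 0 < M₁ := lt_min (Real.rpow_pos_of_pos (by norm_num) _)
      (Real.rpow_pos_of_pos one_pos _)
    have hM₂p : 0 < M₂ := lt_min (Real.rpow_pos_of_pos (by norm_num) _)
      (Real.rpow_pos_of_pos one_pos _)
    have hM₃p : 0 < M₃ := lt_min (Real.rpow_pos_of_pos (by norm_num) _)
      (Real.rpow_pos_of_pos (by norm_num) _)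
    refine div_of_sets θ₁ θ₂ θ₃ (fun k => P d (ρ k) (1/2) (3/4))
      (fun k => measurableSet_P _ _ _) ?_ ?_
      (ENNReal.ofReal (M₁ * M₂ * M₃ * (1/4)) * volume (shl d 1)) ?_ ?_
    · have key : ∀ j k : ℕ, j < k →
          Disjoint (P d (ρ j) (1/2) (3/4)) (P d (ρ k) (1/2) (3/4)) := by
        intro j k hjk
        rw [Set.disjoint_left]
        intro x hxj hxk
        obtain ⟨⟨ha, hb⟩, -⟩ := hxj
        obtain ⟨⟨hc, he⟩, -⟩ := hxk
        have := ρ_succ_le j k hjk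
        exact absurd rfl (by intro _; linarith : ¬ (x = x))
      intro j k hjk
      rcases hjk.lt_or_gt with hlt | hlt
      · exact key j k hlt
      · exact (key k j hlt).symm
    · intro k x hx
      obtain ⟨⟨ha, hb⟩, hc, he⟩ := hx
      rw [mem_ball_zero_iff]
      have hx0 : (0:ℝ) < xLast d x := by linarith
      have h2' : |xLast d x| ≤ 3/4 := by rw [abs_of_pos hx0]; linarith
      have hnp' : normPrime d x ≤ 1/2 := le_trans hb.le (ρ_le_half k)
      nlinarith [norm_sq_eq x, norm_nonneg x, abs_nonneg (xLast d x), sq_abs (xLast d x),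
        normPrime_nonneg x]
    · refine mul_ne_zero ?_ (volume_shl_one_ne_zero hd1)
      rw [Ne, ENNReal.ofReal_eq_zero, not_le]
      have : (0:ℝ) < M₁ * M₂ * M₃ := mul_pos (mul_pos hM₁p hM₂p) hM₃p
      linarith
    · intro k
      have hρ := ρ_pos k
      have hρh := ρ_le_half k
      have hm : ∀ x ∈ P d (ρ k) (1/2) (3/4),
          min ((ρ k/2) ^ θ₁) ((ρ k) ^ θ₁) * M₂ * M₃ ≤ wt d θ₁ θ₂ θ₃ x := by
        intro x hx
        obtain ⟨⟨ha, hb⟩, hc, he⟩ := hx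
        have hx0 : (0:ℝ) < xLast d x := by linarith
        have hxl : (1/2:ℝ) ≤ |xLast d x| := by rw [abs_of_pos hx0]; linarith
        have hxl' : |xLast d x| ≤ 3/4 := by rw [abs_of_pos hx0]; linarith
        have hn1 : (1/2:ℝ) ≤ ‖x‖ := le_trans hxl (abs_xLast_le_norm x)
        have hn2 : ‖x‖ ≤ 1 := norm_le_of (le_trans hb.le hρh) hxl' (by norm_num) (by norm_num)
        exact wt_ge θ₁ θ₂ θ₃ (by linarith) (by norm_num) (by norm_num)
          ha.le hb.le hn1 hn2 hxl hxl'
      have hminp : (0:ℝ) < min ((ρ k/2) ^ θ₁) ((ρ k) ^ θ₁) :=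
        lt_min (Real.rpow_pos_of_pos (by linarith) _) (Real.rpow_pos_of_pos hρ _)
      calc ENNReal.ofReal (M₁ * M₂ * M₃ * (1/4)) * volume (shl d 1)
          ≤ ENNReal.ofReal ((min ((ρ k/2) ^ θ₁) ((ρ k) ^ θ₁) * M₂ * M₃)
              * ((3/4 - 1/2) * (ρ k) ^ d)) * volume (shl d 1) := by
            refine mul_le_mul_left (ENNReal.ofReal_le_ofReal ?_) _
            have A := min_rpow_scale (x := ρ k) (c₁ := 1/2) (c₂ := 1) (θ := θ₁)
              hρ.le (by norm_num) (by norm_num)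
            rw [mul_one, mul_one_div] at A
            have hone : ((1:ℝ)) ^ θ₁ = 1 := Real.one_rpow _
            have B : (1:ℝ) ≤ (ρ k) ^ θ₁ * (ρ k) ^ d := by
              have e : (ρ k) ^ (θ₁ + (d:ℝ)) = (ρ k) ^ θ₁ * (ρ k) ^ d := by
                rw [Real.rpow_add hρ, Real.rpow_natCast]
              rw [← e]
              exact rpow_prod_ge_one hρ (by linarith) (by linarith)
            calc M₁ * M₂ * M₃ * (1/4) = (M₂ * M₃ * (1/4)) * (M₁ * 1) := by ring
              _ ≤ (M₂ * M₃ * (1/4)) * (M₁ * ((ρ k) ^ θ₁ * (ρ k) ^ d)) := by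
                  refine mul_le_mul_of_nonneg_left ?_
                    (by have := mul_pos (mul_pos hM₂p hM₃p) (by norm_num : (0:ℝ) < 1/4); linarith)
                  exact mul_le_mul_of_nonneg_left B hM₁p.le
              _ = ((ρ k) ^ θ₁ * M₁) * M₂ * M₃ * (1/4) * (ρ k) ^ d := by ring
              _ ≤ (min ((ρ k/2) ^ θ₁) ((ρ k) ^ θ₁)) * M₂ * M₃ * (1/4) * (ρ k) ^ d := by
                  refine mul_le_mul_of_nonneg_right (mul_le_mul_of_nonneg_right
                    (mul_le_mul_of_nonneg_right (mul_le_mul_of_nonneg_right A hM₂p.le)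
                      hM₃p.le) (by norm_num)) (pow_nonneg hρ.le d)
              _ = (min ((ρ k/2) ^ θ₁) ((ρ k) ^ θ₁) * M₂ * M₃)
                    * ((3/4 - 1/2) * (ρ k) ^ d) := by ring
        _ = ENNReal.ofReal (min ((ρ k/2) ^ θ₁) ((ρ k) ^ θ₁) * M₂ * M₃)
              * volume (P d (ρ k) (1/2) (3/4)) := by
            rw [volume_P hρ, ENNReal.ofReal_mul
              (by positivity : (0:ℝ) ≤ min ((ρ k/2) ^ θ₁) ((ρ k) ^ θ₁) * M₂ * M₃),
              ENNReal.ofReal_mul (by norm_num : (0:ℝ) ≤ 3/4 - 1/2)]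
            ring
        _ ≤ ∫⁻ x in P d (ρ k) (1/2) (3/4), ENNReal.ofReal (wt d θ₁ θ₂ θ₃ x) :=
            setLIntegral_wt_ge θ₁ θ₂ θ₃ (measurableSet_P _ _ _) hm
  · by_cases h3 : θ₃ ≤ -1
    · -- Case 2 : divergence near the hyperplane
      set M₁ := min ((1/4:ℝ) ^ θ₁) ((1/2:ℝ) ^ θ₁) with hM₁
      set M₂ := min ((1/4:ℝ) ^ θ₂) ((1:ℝ) ^ θ₂) with hM₂
      set M₃ := min ((1/2:ℝ) ^ θ₃) ((1:ℝ) ^ θ₃) with hM₃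
      have hM₁p : 0 < M₁ := lt_min (Real.rpow_pos_of_pos (by norm_num) _)
        (Real.rpow_pos_of_pos (by norm_num) _)
      have hM₂p : 0 < M₂ := lt_min (Real.rpow_pos_of_pos (by norm_num) _)
        (Real.rpow_pos_of_pos one_pos _)
      have hM₃p : 0 < M₃ := lt_min (Real.rpow_pos_of_pos (by norm_num) _)
        (Real.rpow_pos_of_pos one_pos _)
      refine div_of_sets θ₁ θ₂ θ₃ (fun k => P d (1/2) (ρ k/2) (ρ k))
        (fun k => measurableSet_P _ _ _) ?_ ?_
        (ENNReal.ofReal (M₁ * M₂ * M₃ * ((1/2) ^ d * (1/2))) * volume (shl d 1)) ?_ ?_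
      · have key : ∀ j k : ℕ, j < k →
            Disjoint (P d (1/2) (ρ j/2) (ρ j)) (P d (1/2) (ρ k/2) (ρ k)) := by
          intro j k hjk
          rw [Set.disjoint_left]
          intro x hxj hxk
          obtain ⟨-, ha, hb⟩ := hxj
          obtain ⟨-, hc, he⟩ := hxk
          have := ρ_succ_le j k hjk
          exact absurd rfl (by intro _; linarith : ¬ (x = x))
        intro j k hjk
        rcases hjk.lt_or_gt with hlt | hlt
        · exact key j k hlt
        · exact (key k j hlt).symm
      · intro k x hx
        obtain ⟨⟨ha, hb⟩, hc, he⟩ := hx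
        rw [mem_ball_zero_iff]
        have hρ := ρ_pos k
        have hρh := ρ_le_half k
        have hx0 : (0:ℝ) < xLast d x := by linarith
        have h2' : |xLast d x| ≤ 1/2 := by rw [abs_of_pos hx0]; linarith
        nlinarith [norm_sq_eq x, norm_nonneg x, abs_nonneg (xLast d x), sq_abs (xLast d x),
          normPrime_nonneg x, hb]
      · refine mul_ne_zero ?_ (volume_shl_one_ne_zero hd1)
        rw [Ne, ENNReal.ofReal_eq_zero, not_le]
        have h4 : (0:ℝ) < (1/2:ℝ) ^ d * (1/2) :=
          mul_pos (pow_pos (by norm_num) d) (by norm_num)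
        have : (0:ℝ) < M₁ * M₂ * M₃ := mul_pos (mul_pos hM₁p hM₂p) hM₃p
        positivity
      · intro k
        have hρ := ρ_pos k
        have hρh := ρ_le_half k
        have hm : ∀ x ∈ P d (1/2) (ρ k/2) (ρ k),
            M₁ * M₂ * min ((ρ k/2) ^ θ₃) ((ρ k) ^ θ₃) ≤ wt d θ₁ θ₂ θ₃ x := by
          intro x hx
          obtain ⟨⟨ha, hb⟩, hc, he⟩ := hx
          have hx0 : (0:ℝ) < xLast d x := by linarith
          have hxl : ρ k/2 ≤ |xLast d x| := by rw [abs_of_pos hx0]; linarith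
          have hxl' : |xLast d x| ≤ ρ k := by rw [abs_of_pos hx0]; linarith
          have hn1 : (1/4:ℝ) ≤ ‖x‖ := by
            have := normPrime_le_norm x
            have ha' : (1/2:ℝ)/2 ≤ normPrime d x := ha.le
            linarith [ha']
          have hn2 : ‖x‖ ≤ 1 := norm_le_of hb.le
            (show |xLast d x| ≤ 1/2 by linarith) (by norm_num) (by norm_num)
          have := wt_ge θ₁ θ₂ θ₃ (show (0:ℝ) < 1/4 by norm_num) (show (0:ℝ) < 1/4 by norm_num)
            (by linarith : (0:ℝ) < ρ k/2) (by linarith [ha] : (1/4:ℝ) ≤ normPrime d x)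
            hb.le hn1 hn2 hxl hxl'
          exact this
        have hminp : (0:ℝ) < min ((ρ k/2) ^ θ₃) ((ρ k) ^ θ₃) :=
          lt_min (Real.rpow_pos_of_pos (by linarith) _) (Real.rpow_pos_of_pos hρ _)
        calc ENNReal.ofReal (M₁ * M₂ * M₃ * ((1/2) ^ d * (1/2))) * volume (shl d 1)
            ≤ ENNReal.ofReal ((M₁ * M₂ * min ((ρ k/2) ^ θ₃) ((ρ k) ^ θ₃))
                * ((ρ k - ρ k/2) * (1/2) ^ d)) * volume (shl d 1) := by
              refine mul_le_mul_left (ENNReal.ofReal_le_ofReal ?_) _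
              have A := min_rpow_scale (x := ρ k) (c₁ := 1/2) (c₂ := 1) (θ := θ₃)
                hρ.le (by norm_num) (by norm_num)
              rw [mul_one, mul_one_div] at A
              have B : (1:ℝ) ≤ (ρ k) ^ θ₃ * ρ k := by
                have e : (ρ k) ^ (θ₃ + (1:ℝ)) = (ρ k) ^ θ₃ * ρ k := by
                  rw [Real.rpow_add hρ, Real.rpow_one]
                rw [← e]
                exact rpow_prod_ge_one hρ (by linarith) (by linarith)
              calc M₁ * M₂ * M₃ * ((1/2) ^ d * (1/2))
                  = (M₁ * M₂ * (1/2) ^ d * (1/2)) * (M₃ * 1) := by ring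
                _ ≤ (M₁ * M₂ * (1/2) ^ d * (1/2)) * (M₃ * ((ρ k) ^ θ₃ * ρ k)) := by
                    refine mul_le_mul_of_nonneg_left ?_ ?_
                    · exact mul_le_mul_of_nonneg_left B hM₃p.le
                    · have := mul_pos (mul_pos (mul_pos hM₁p hM₂p)
                        (pow_pos (by norm_num : (0:ℝ) < 1/2) d)) (by norm_num : (0:ℝ) < 1/2)
                      linarith
                _ = M₁ * M₂ * ((ρ k) ^ θ₃ * M₃) * ((ρ k/2) * (1/2) ^ d) := by ring
                _ ≤ M₁ * M₂ * min ((ρ k/2) ^ θ₃) ((ρ k) ^ θ₃) * ((ρ k/2) * (1/2) ^ d) := by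
                    refine mul_le_mul_of_nonneg_right (mul_le_mul_of_nonneg_left A
                      (mul_nonneg hM₁p.le hM₂p.le)) ?_
                    exact mul_nonneg (by linarith) (pow_nonneg (by norm_num) d)
                _ = (M₁ * M₂ * min ((ρ k/2) ^ θ₃) ((ρ k) ^ θ₃))
                      * ((ρ k - ρ k/2) * (1/2) ^ d) := by ring
          _ = ENNReal.ofReal (M₁ * M₂ * min ((ρ k/2) ^ θ₃) ((ρ k) ^ θ₃))
                * volume (P d (1/2) (ρ k/2) (ρ k)) := by
              rw [volume_P (by norm_num : (0:ℝ) < 1/2), ENNReal.ofReal_mul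
                (by positivity : (0:ℝ) ≤ M₁ * M₂ * min ((ρ k/2) ^ θ₃) ((ρ k) ^ θ₃)),
                ENNReal.ofReal_mul (by linarith : (0:ℝ) ≤ ρ k - ρ k/2)]
              ring
          _ ≤ ∫⁻ x in P d (1/2) (ρ k/2) (ρ k), ENNReal.ofReal (wt d θ₁ θ₂ θ₃ x) :=
              setLIntegral_wt_ge θ₁ θ₂ θ₃ (measurableSet_P _ _ _) hm
    · -- Case 3 : divergence at the origin
      push_neg at h1 h3
      have h2 : θ₂ < 0 := by
        by_contra hge
        push_neg at hge
        have := hnA (by linarith) hge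
        linarith
      have hsum : θ₁ + θ₂ + θ₃ ≤ -((d:ℝ) + 1) := by
        have := hnB (by linarith) h2 h3
        linarith
      set M₁ := min ((1/2:ℝ) ^ θ₁) ((1:ℝ) ^ θ₁) with hM₁
      set M₂ := min ((1/2:ℝ) ^ θ₂) ((2:ℝ) ^ θ₂) with hM₂
      set M₃ := min ((1/2:ℝ) ^ θ₃) ((1:ℝ) ^ θ₃) with hM₃
      have hM₁p : 0 < M₁ := lt_min (Real.rpow_pos_of_pos (by norm_num) _)
        (Real.rpow_pos_of_pos one_pos _)
      have hM₂p : 0 < M₂ := lt_min (Real.rpow_pos_of_pos (by norm_num) _)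
        (Real.rpow_pos_of_pos (by norm_num) _)
      have hM₃p : 0 < M₃ := lt_min (Real.rpow_pos_of_pos (by norm_num) _)
        (Real.rpow_pos_of_pos one_pos _)
      refine div_of_sets θ₁ θ₂ θ₃ (fun k => P d (ρ k) (ρ k/2) (ρ k))
        (fun k => measurableSet_P _ _ _) ?_ ?_
        (ENNReal.ofReal (M₁ * M₂ * M₃ * (1/2)) * volume (shl d 1)) ?_ ?_
      · have key : ∀ j k : ℕ, j < k →
            Disjoint (P d (ρ j) (ρ j/2) (ρ j)) (P d (ρ k) (ρ k/2) (ρ k)) := by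
          intro j k hjk
          rw [Set.disjoint_left]
          intro x hxj hxk
          obtain ⟨-, ha, hb⟩ := hxj
          obtain ⟨-, hc, he⟩ := hxk
          have := ρ_succ_le j k hjk
          exact absurd rfl (by intro _; linarith : ¬ (x = x))
        intro j k hjk
        rcases hjk.lt_or_gt with hlt | hlt
        · exact key j k hlt
        · exact (key k j hlt).symm
      · intro k x hx
        obtain ⟨⟨ha, hb⟩, hc, he⟩ := hx
        rw [mem_ball_zero_iff]
        have hρ := ρ_pos k
        have hρh := ρ_le_half k
        have hx0 : (0:ℝ) < xLast d x := by linarith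
        have h2' : |xLast d x| ≤ 1/2 := by rw [abs_of_pos hx0]; linarith
        have hb' : normPrime d x ≤ 1/2 := by linarith
        nlinarith [norm_sq_eq x, norm_nonneg x, abs_nonneg (xLast d x), sq_abs (xLast d x),
          normPrime_nonneg x]
      · refine mul_ne_zero ?_ (volume_shl_one_ne_zero hd1)
        rw [Ne, ENNReal.ofReal_eq_zero, not_le]
        have : (0:ℝ) < M₁ * M₂ * M₃ := mul_pos (mul_pos hM₁p hM₂p) hM₃p
        linarith
      · intro k
        have hρ := ρ_pos k
        have hρh := ρ_le_half k
        have hm : ∀ x ∈ P d (ρ k) (ρ k/2) (ρ k),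
            min ((ρ k/2) ^ θ₁) ((ρ k) ^ θ₁) * min ((ρ k/2) ^ θ₂) ((ρ k * 2) ^ θ₂)
              * min ((ρ k/2) ^ θ₃) ((ρ k) ^ θ₃) ≤ wt d θ₁ θ₂ θ₃ x := by
          intro x hx
          obtain ⟨⟨ha, hb⟩, hc, he⟩ := hx
          have hx0 : (0:ℝ) < xLast d x := by linarith
          have hxl : ρ k/2 ≤ |xLast d x| := by rw [abs_of_pos hx0]; linarith
          have hxl' : |xLast d x| ≤ ρ k := by rw [abs_of_pos hx0]; linarith
          have hn1 : ρ k/2 ≤ ‖x‖ := le_trans hxl (abs_xLast_le_norm x)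
          have hn2 : ‖x‖ ≤ ρ k * 2 := norm_le_of hb.le hxl' (by nlinarith) (by linarith)
          exact wt_ge θ₁ θ₂ θ₃ (by linarith) (by linarith) (by linarith)
            ha.le hb.le hn1 hn2 hxl hxl'
        have hm1p : (0:ℝ) < min ((ρ k/2) ^ θ₁) ((ρ k) ^ θ₁) :=
          lt_min (Real.rpow_pos_of_pos (by linarith) _) (Real.rpow_pos_of_pos hρ _)
        have hm2p : (0:ℝ) < min ((ρ k/2) ^ θ₂) ((ρ k * 2) ^ θ₂) :=
          lt_min (Real.rpow_pos_of_pos (by linarith) _) (Real.rpow_pos_of_pos (by linarith) _)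
        have hm3p : (0:ℝ) < min ((ρ k/2) ^ θ₃) ((ρ k) ^ θ₃) :=
          lt_min (Real.rpow_pos_of_pos (by linarith) _) (Real.rpow_pos_of_pos hρ _)
        calc ENNReal.ofReal (M₁ * M₂ * M₃ * (1/2)) * volume (shl d 1)
            ≤ ENNReal.ofReal ((min ((ρ k/2) ^ θ₁) ((ρ k) ^ θ₁)
                * min ((ρ k/2) ^ θ₂) ((ρ k * 2) ^ θ₂) * min ((ρ k/2) ^ θ₃) ((ρ k) ^ θ₃))
                * ((ρ k - ρ k/2) * (ρ k) ^ d)) * volume (shl d 1) := by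
              refine mul_le_mul_left (ENNReal.ofReal_le_ofReal ?_) _
              have A₁ := min_rpow_scale (x := ρ k) (c₁ := 1/2) (c₂ := 1) (θ := θ₁)
                hρ.le (by norm_num) (by norm_num)
              rw [mul_one, mul_one_div] at A₁
              have A₂ := min_rpow_scale (x := ρ k) (c₁ := 1/2) (c₂ := 2) (θ := θ₂)
                hρ.le (by norm_num) (by norm_num)
              rw [mul_one_div] at A₂
              have A₃ := min_rpow_scale (x := ρ k) (c₁ := 1/2) (c₂ := 1) (θ := θ₃)
                hρ.le (by norm_num) (by norm_num)
              rw [mul_one, mul_one_div] at A₃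
              have B : (1:ℝ) ≤ (ρ k) ^ θ₁ * (ρ k) ^ θ₂ * (ρ k) ^ θ₃ * ρ k * (ρ k) ^ d := by
                have e : (ρ k) ^ (θ₁ + (θ₂ + (θ₃ + (1 + (d:ℝ)))))
                    = (ρ k) ^ θ₁ * (ρ k) ^ θ₂ * (ρ k) ^ θ₃ * ρ k * (ρ k) ^ d := by
                  rw [Real.rpow_add hρ, Real.rpow_add hρ, Real.rpow_add hρ, Real.rpow_add hρ,
                    Real.rpow_one, Real.rpow_natCast]
                  ring
                rw [← e]
                exact rpow_prod_ge_one hρ (by linarith) (by linarith)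
              calc M₁ * M₂ * M₃ * (1/2)
                  = (M₁ * M₂ * M₃ * (1/2)) * 1 := (mul_one _).symm
                _ ≤ (M₁ * M₂ * M₃ * (1/2))
                      * ((ρ k) ^ θ₁ * (ρ k) ^ θ₂ * (ρ k) ^ θ₃ * ρ k * (ρ k) ^ d) := by
                    refine mul_le_mul_of_nonneg_left B ?_
                    have := mul_pos (mul_pos (mul_pos hM₁p hM₂p) hM₃p)
                      (by norm_num : (0:ℝ) < 1/2)
                    linarith
                _ = ((ρ k) ^ θ₁ * M₁) * ((ρ k) ^ θ₂ * M₂) * ((ρ k) ^ θ₃ * M₃)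
                      * ((ρ k - ρ k/2) * (ρ k) ^ d) := by ring
                _ ≤ (min ((ρ k/2) ^ θ₁) ((ρ k) ^ θ₁)
                      * min ((ρ k/2) ^ θ₂) ((ρ k * 2) ^ θ₂)
                      * min ((ρ k/2) ^ θ₃) ((ρ k) ^ θ₃))
                      * ((ρ k - ρ k/2) * (ρ k) ^ d) := by
                    refine mul_le_mul_of_nonneg_right ?_
                      (mul_nonneg (by linarith) (pow_nonneg hρ.le d))
                    refine mul_le_mul (mul_le_mul A₁ A₂
                      (mul_nonneg (Real.rpow_nonneg hρ.le _) hM₂p.le) hm1p.le) A₃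
                      (mul_nonneg (Real.rpow_nonneg hρ.le _) hM₃p.le)
                      (mul_nonneg hm1p.le hm2p.le)
          _ = ENNReal.ofReal (min ((ρ k/2) ^ θ₁) ((ρ k) ^ θ₁)
                * min ((ρ k/2) ^ θ₂) ((ρ k * 2) ^ θ₂) * min ((ρ k/2) ^ θ₃) ((ρ k) ^ θ₃))
                * volume (P d (ρ k) (ρ k/2) (ρ k)) := by
              rw [volume_P hρ, ENNReal.ofReal_mul
                (by positivity : (0:ℝ) ≤ min ((ρ k/2) ^ θ₁) ((ρ k) ^ θ₁)
                  * min ((ρ k/2) ^ θ₂) ((ρ k * 2) ^ θ₂) * min ((ρ k/2) ^ θ₃) ((ρ k) ^ θ₃)),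
                ENNReal.ofReal_mul (by linarith : (0:ℝ) ≤ ρ k - ρ k/2)]
              ring
          _ ≤ ∫⁻ x in P d (ρ k) (ρ k/2) (ρ k), ENNReal.ofReal (wt d θ₁ θ₂ θ₃ x) :=
              setLIntegral_wt_ge θ₁ θ₂ θ₃ (measurableSet_P _ _ _) hm

lemma wt_dual (p : ℝ) (hp : 1 < p) (θ₁ θ₂ θ₃ : ℝ) (x : Spc d) :
    wt d θ₁ θ₂ θ₃ x ^ (-(1 / (p - 1)))
      = wt d (θ₁ * (-(1/(p-1)))) (θ₂ * (-(1/(p-1)))) (θ₃ * (-(1/(p-1)))) x := by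
  unfold wt
  rw [Real.mul_rpow (mul_nonneg (Real.rpow_nonneg (normPrime_nonneg x) _)
      (Real.rpow_nonneg (norm_nonneg x) _)) (Real.rpow_nonneg (abs_nonneg _) _),
    Real.mul_rpow (Real.rpow_nonneg (normPrime_nonneg x) _) (Real.rpow_nonneg (norm_nonneg x) _),
    ← Real.rpow_mul (normPrime_nonneg x), ← Real.rpow_mul (norm_nonneg x),
    ← Real.rpow_mul (abs_nonneg _)]

lemma dual_cond (p θ₁ θ₂ θ₃ : ℝ) (hp : 1 < p)
    (hC : ¬ inC (d + 1) p θ₁ θ₂ θ₃) (hD : ¬ inD (d + 1) p θ₁ θ₂ θ₃) :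
    ¬ inA (d + 1) (θ₁ * (-(1/(p-1)))) (θ₂ * (-(1/(p-1)))) (θ₃ * (-(1/(p-1)))) ∧
    ¬ inB (d + 1) (θ₁ * (-(1/(p-1)))) (θ₂ * (-(1/(p-1)))) (θ₃ * (-(1/(p-1)))) := by
  have hq : 0 < p - 1 := by linarith
  have hs : (-(1/(p-1))) * (p - 1) = -1 := by field_simp
  have hslt : -(1/(p-1)) < 0 := by
    have : 0 < 1/(p-1) := by positivity
    linarith
  have key : ∀ a b : ℝ, -b < a * (-(1/(p-1))) → a < b * (p - 1) := by
    intro a b h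
    have h2 := mul_lt_mul_of_pos_right h hq
    rw [mul_assoc, hs, mul_neg_one] at h2
    nlinarith
  constructor
  · rintro ⟨hA1, hA2, hA3⟩
    apply hC
    refine ⟨key θ₁ _ hA1, ?_, ?_⟩
    · by_contra hpos
      push_neg at hpos
      nlinarith
    · have := key θ₃ 1 (by simpa using hA3)
      simpa using this
  · rintro ⟨hB1, hB2, hB3, hB4⟩
    apply hD
    refine ⟨key θ₁ _ hB1, ?_, ?_, ?_⟩
    · by_contra hpos
      push_neg at hpos
      nlinarith [mul_pos_of_neg_of_neg (lt_of_le_of_ne hpos (by intro h; subst h; simp at hB2)) hslt]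
    · have := key θ₃ 1 (by simpa using hB3)
      simpa using this
    · have h4 : -((d:ℝ) + 1) < (θ₁ + θ₂ + θ₃) * (-(1/(p-1))) := by
        push_cast at hB4
        nlinarith [hB4]
      have := key (θ₁ + θ₂ + θ₃) ((d:ℝ) + 1) h4
      push_cast
      linarith

lemma lint_ne_zero (hd1 : 1 ≤ d) (θ₁ θ₂ θ₃ : ℝ) :
    ∫⁻ x in ball (0 : Spc d) 1, ENNReal.ofReal (wt d θ₁ θ₂ θ₃ x) ≠ 0 := by
  haveI : Nonempty (Fin d) := ⟨⟨0, hd1⟩⟩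
  have hN1 : volume {x : Spc d | normPrime d x ∈ ({0} : Set ℝ) ∧ xLast d x ∈ Set.univ} = 0 := by
    rw [volume_split _ _ (measurableSet_singleton 0) MeasurableSet.univ]
    have : {z : EuclideanSpace ℝ (Fin d) | ‖z‖ ∈ ({0} : Set ℝ)} = {0} := by
      ext z; simp
    rw [this, measure_singleton, mul_zero]
  have hN2 : volume {x : Spc d | normPrime d x ∈ Set.univ ∧ xLast d x ∈ ({0} : Set ℝ)} = 0 := by
    rw [volume_split _ _ MeasurableSet.univ (measurableSet_singleton 0)]
    rw [Real.volume_singleton, zero_mul]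
  have hae : ∀ᵐ x : Spc d, normPrime d x ≠ 0 ∧ xLast d x ≠ 0 := by
    have := measure_union_le (μ := (volume : Measure (Spc d)))
      {x : Spc d | normPrime d x ∈ ({0} : Set ℝ) ∧ xLast d x ∈ Set.univ}
      {x : Spc d | normPrime d x ∈ Set.univ ∧ xLast d x ∈ ({0} : Set ℝ)}
    rw [hN1, hN2] at this
    simp only [nonpos_iff_eq_zero, add_zero] at this
    rw [ae_iff]
    refine measure_mono_null ?_ this
    intro x hx
    simp only [Set.mem_setOf_eq, not_and_or, not_not] at hx
    rcases hx with hx | hx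
    · exact Or.inl ⟨hx, trivial⟩
    · exact Or.inr ⟨trivial, hx⟩
  intro h0
  rw [lintegral_eq_zero_iff ((measurable_wt θ₁ θ₂ θ₃).ennreal_ofReal)] at h0
  have hpos : ∀ᵐ x ∂(volume.restrict (ball (0 : Spc d) 1)), 0 < wt d θ₁ θ₂ θ₃ x := by
    refine (ae_restrict_of_ae hae).mono ?_
    rintro x ⟨h1, h2⟩
    have hx0 : x ≠ 0 := by
      intro h
      apply h2
      rw [h, xLast]
      rfl
    have : 0 < ‖x‖ := norm_pos_iff.mpr hx0
    have hnp : 0 < normPrime d x := lt_of_le_of_ne (normPrime_nonneg x) (Ne.symm h1)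
    have hxl : 0 < |xLast d x| := abs_pos.mpr h2
    unfold wt
    positivity
  have hfalse : ∀ᵐ x ∂(volume.restrict (ball (0 : Spc d) 1)), False := by
    filter_upwards [h0, hpos] with x hx1 hx2
    rw [Pi.zero_apply, ENNReal.ofReal_eq_zero] at hx1
    linarith
  rw [ae_iff] at hfalse
  simp only [not_false_eq_true, Set.setOf_true] at hfalse
  rw [Measure.restrict_apply_univ] at hfalse
  exact (measure_ball_pos volume (0 : Spc d) one_pos).ne' hfalse

end Aux


theorem stmt3 (d : ℕ) (hd : 1 ≤ d) (p θ₁ θ₂ θ₃ : ℝ) (hp : 1 < p)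
    (h : ¬((inA (d + 1) θ₁ θ₂ θ₃ ∨ inB (d + 1) θ₁ θ₂ θ₃) ∧ (inC (d + 1) p θ₁ θ₂ θ₃ ∨ inD (d + 1) p θ₁ θ₂ θ₃))) :
    (⨆ (c : Spc d) (R : ℝ) (_ : 0 < R), apProd d p θ₁ θ₂ θ₃ c R) = ⊤ := by
  have hp1 : (0:ℝ) < p - 1 := by linarith
  have hv0 : volume (ball (0 : Spc d) 1) ≠ 0 := (measure_ball_pos volume (0 : Spc d) one_pos).ne'
  have hvt : volume (ball (0 : Spc d) 1) ≠ ⊤ := measure_ball_lt_top.ne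
  have hkey : apProd d p θ₁ θ₂ θ₃ 0 1 = ⊤ := by
    rw [apProd]
    have hre : (∫⁻ x in ball (0:Spc d) 1, ENNReal.ofReal (wt d θ₁ θ₂ θ₃ x ^ (-(1/(p-1)))))
        = ∫⁻ x in ball (0:Spc d) 1,
            ENNReal.ofReal (wt d (θ₁ * (-(1/(p-1)))) (θ₂ * (-(1/(p-1)))) (θ₃ * (-(1/(p-1)))) x) :=
      lintegral_congr fun x => by rw [wt_dual p hp]
    rw [hre]
    rcases not_and_or.mp h with hAB | hCD
    · rw [not_or] at hAB
      have h1 := main_div hd θ₁ θ₂ θ₃ hAB.1 hAB.2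
      rw [h1, ENNReal.top_div_of_ne_top hvt]
      have h20 : (∫⁻ x in ball (0:Spc d) 1,
          ENNReal.ofReal (wt d (θ₁ * (-(1/(p-1)))) (θ₂ * (-(1/(p-1)))) (θ₃ * (-(1/(p-1)))) x))
          ≠ 0 := lint_ne_zero hd _ _ _
      have hdiv : (∫⁻ x in ball (0:Spc d) 1,
          ENNReal.ofReal (wt d (θ₁ * (-(1/(p-1)))) (θ₂ * (-(1/(p-1)))) (θ₃ * (-(1/(p-1)))) x))
          / volume (ball (0:Spc d) 1) ≠ 0 := by
        intro hc
        rcases ENNReal.div_eq_zero_iff.mp hc with h' | h'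
        exacts [h20 h', hvt h']
      rw [ENNReal.top_mul]
      rw [Ne, ENNReal.rpow_eq_zero_iff_of_pos hp1]
      exact hdiv
    · rw [not_or] at hCD
      obtain ⟨hA', hB'⟩ := dual_cond p θ₁ θ₂ θ₃ hp hCD.1 hCD.2
      have h2 := main_div hd _ _ _ hA' hB'
      rw [h2, ENNReal.top_div_of_ne_top hvt, ENNReal.top_rpow_of_pos hp1]
      have h10 : (∫⁻ x in ball (0:Spc d) 1, ENNReal.ofReal (wt d θ₁ θ₂ θ₃ x)) ≠ 0 :=
        lint_ne_zero hd _ _ _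
      rw [ENNReal.mul_top]
      intro hc
      rcases ENNReal.div_eq_zero_iff.mp hc with h' | h'
      exacts [h10 h', hvt h']
  refine top_unique ?_
  exact le_iSup_of_le (0 : Spc d) (le_iSup_of_le (1 : ℝ) (le_iSup_of_le one_pos
    (le_of_eq hkey.symm)))

end Aniso
end
end

section
/- Suppose (θ1,θ2,θ3) ∈ 𝒜 ∪ ℬ. Then there exists a constant c = c(n,θ1,θ2,θ3) > 0 such that for every x̄ = (x̄', x̄_n) ∈ ℝ^n and every R > 0 with |x̄_n| ≥ 3R and |x̄'| ≥ (3/2)R, one has ∫_{B_R(x̄)} |x'|^{θ1}|x|^{θ2}|x_n|^{θ3} dx ≥ c |x̄'|^{θ1}|x̄|^{θ2}|x̄_n|^{θ3} R^{n}. -/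
open MeasureTheory Metric ENNReal RealInnerProductSpace

noncomputable section

namespace Aniso

def projF (d : ℕ) (v : Spc d) : EuclideanSpace ℝ (Fin d) :=
  WithLp.toLp 2 (fun i : Fin d => v i.castSucc)

lemma norm_projF (d : ℕ) (v : Spc d) : ‖projF d v‖ = normPrime d v := by
  rw [EuclideanSpace.norm_eq, normPrime]
  congr 1
  exact Finset.sum_congr rfl fun i _ => by simp [projF, Real.norm_eq_abs, sq_abs]

lemma projF_sub (d : ℕ) (x y : Spc d) : projF d (x - y) = projF d x - projF d y := by
  ext i; simp [projF]

lemma xLast_sub (d : ℕ) (x y : Spc d) : xLast d (x - y) = xLast d x - xLast d y := by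
  simp [xLast]

lemma norm_projF_le (d : ℕ) (v : Spc d) : ‖projF d v‖ ≤ ‖v‖ := by
  rw [EuclideanSpace.norm_eq, EuclideanSpace.norm_eq]
  apply Real.sqrt_le_sqrt
  rw [Fin.sum_univ_castSucc]
  have : ∑ i : Fin d, ‖projF d v i‖ ^ 2 = ∑ i : Fin d, ‖v i.castSucc‖ ^ 2 := rfl
  rw [this]
  exact le_add_of_nonneg_right (by positivity)

lemma abs_xLast_le (d : ℕ) (v : Spc d) : |xLast d v| ≤ ‖v‖ := by
  rw [EuclideanSpace.norm_eq, Fin.sum_univ_castSucc]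
  have : |xLast d v| = Real.sqrt (‖v (Fin.last d)‖ ^ 2) := by
    rw [Real.sqrt_sq_eq_abs]; simp [xLast]
  rw [this]
  apply Real.sqrt_le_sqrt
  exact le_add_of_nonneg_left (by positivity)

lemma rpow_ratio {s t : ℝ} (θ : ℝ) (hs : 0 < s) (h1 : s / 3 ≤ t) (h2 : t ≤ 3 * s) :
    (3 : ℝ) ^ (-|θ|) * s ^ θ ≤ t ^ θ := by
  have ht : 0 < t := lt_of_lt_of_le (by linarith) h1
  rcases le_or_gt 0 θ with hθ | hθ
  · rw [abs_of_nonneg hθ]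
    have e : (3 : ℝ) ^ (-θ) * s ^ θ = (s / 3) ^ θ := by
      rw [Real.div_rpow hs.le (by norm_num), Real.rpow_neg (by norm_num)]
      ring
    rw [e]
    exact Real.rpow_le_rpow (by positivity) h1 hθ
  · rw [abs_of_neg hθ, neg_neg]
    have e : (3 : ℝ) ^ θ * s ^ θ = (3 * s) ^ θ := (Real.mul_rpow (by norm_num) hs.le).symm
    rw [e]
    exact Real.rpow_le_rpow_of_nonpos ht h2 hθ.le

theorem stmt19 (d : ℕ) (hd : 1 ≤ d) (θ₁ θ₂ θ₃ : ℝ)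
    (h : (inA (d + 1) θ₁ θ₂ θ₃ ∨ inB (d + 1) θ₁ θ₂ θ₃)) :
    ∃ c0 : ℝ, 0 < c0 ∧ ∀ (c : Spc d) (R : ℝ), 0 < R →
      3 * R ≤ |xLast d c| → (3 / 2) * R ≤ normPrime d c →
      ENNReal.ofReal (c0 * wt d θ₁ θ₂ θ₃ c * R ^ ((d : ℝ) + 1)) ≤
        ∫⁻ x in ball c R, ENNReal.ofReal (wt d θ₁ θ₂ θ₃ x) := by
  set V : ℝ≥0∞ := volume (ball (0 : Spc d) 1) with hV
  have hVpos : 0 < V := measure_ball_pos volume 0 one_pos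
  have hVne : V ≠ ⊤ := measure_ball_lt_top.ne
  set K : ℝ := (3 : ℝ) ^ (-(|θ₁| + |θ₂| + |θ₃|)) with hK
  have hKpos : 0 < K := Real.rpow_pos_of_pos (by norm_num) _
  refine ⟨K * V.toReal, mul_pos hKpos (ENNReal.toReal_pos hVpos.ne' hVne), fun c R hR h3 h32 => ?_⟩
  have hc3 : 0 < |xLast d c| := lt_of_lt_of_le (by linarith) h3
  have hc1 : 0 < normPrime d c := lt_of_lt_of_le (by linarith) h32
  have hc2 : 0 < ‖c‖ := lt_of_lt_of_le hc3 (abs_xLast_le d c)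
  have hc2' : 3 * R ≤ ‖c‖ := le_trans h3 (abs_xLast_le d c)
  -- pointwise bound
  have key : ∀ x ∈ ball c R, K * wt d θ₁ θ₂ θ₃ c ≤ wt d θ₁ θ₂ θ₃ x := by
    intro x hx
    have hxc : ‖x - c‖ < R := by
      rwa [mem_ball, dist_eq_norm] at hx
    have e1 : |normPrime d x - normPrime d c| ≤ ‖x - c‖ := by
      rw [← norm_projF, ← norm_projF]
      calc |‖projF d x‖ - ‖projF d c‖| ≤ ‖projF d x - projF d c‖ := abs_norm_sub_norm_le _ _
        _ = ‖projF d (x - c)‖ := by rw [projF_sub]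
        _ ≤ ‖x - c‖ := norm_projF_le d _
    have e2 : |‖x‖ - ‖c‖| ≤ ‖x - c‖ := abs_norm_sub_norm_le _ _
    have e3 : |(|xLast d x| - |xLast d c|)| ≤ ‖x - c‖ := by
      calc |(|xLast d x| - |xLast d c|)| ≤ |xLast d x - xLast d c| := abs_abs_sub_abs_le_abs_sub _ _
        _ = |xLast d (x - c)| := by rw [xLast_sub]
        _ ≤ ‖x - c‖ := abs_xLast_le d _
    have b1l : normPrime d c / 3 ≤ normPrime d x := by
      have := abs_le.mp e1; nlinarith [this.2]
    have b1u : normPrime d x ≤ 3 * normPrime d c := by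
      have := abs_le.mp e1; nlinarith [this.1]
    have b2l : ‖c‖ / 3 ≤ ‖x‖ := by
      have := abs_le.mp e2; nlinarith [this.2]
    have b2u : ‖x‖ ≤ 3 * ‖c‖ := by
      have := abs_le.mp e2; nlinarith [this.1]
    have b3l : |xLast d c| / 3 ≤ |xLast d x| := by
      have := abs_le.mp e3; nlinarith [this.2]
    have b3u : |xLast d x| ≤ 3 * |xLast d c| := by
      have := abs_le.mp e3; nlinarith [this.1]
    have r1 := rpow_ratio θ₁ hc1 b1l b1u
    have r2 := rpow_ratio θ₂ hc2 b2l b2u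
    have r3 := rpow_ratio θ₃ hc3 b3l b3u
    have hKsplit : K = (3:ℝ) ^ (-|θ₁|) * (3:ℝ) ^ (-|θ₂|) * (3:ℝ) ^ (-|θ₃|) := by
      rw [hK, show -(|θ₁| + |θ₂| + |θ₃|) = -|θ₁| + -|θ₂| + -|θ₃| by ring,
        Real.rpow_add (by norm_num), Real.rpow_add (by norm_num)]
    rw [wt, wt, hKsplit]
    calc (3:ℝ) ^ (-|θ₁|) * 3 ^ (-|θ₂|) * 3 ^ (-|θ₃|) *
          (normPrime d c ^ θ₁ * ‖c‖ ^ θ₂ * |xLast d c| ^ θ₃)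
        = (3 ^ (-|θ₁|) * normPrime d c ^ θ₁) * (3 ^ (-|θ₂|) * ‖c‖ ^ θ₂) *
          (3 ^ (-|θ₃|) * |xLast d c| ^ θ₃) := by ring
      _ ≤ normPrime d x ^ θ₁ * ‖x‖ ^ θ₂ * |xLast d x| ^ θ₃ := by
          have nx1 : (0:ℝ) ≤ normPrime d x ^ θ₁ := Real.rpow_nonneg (Real.sqrt_nonneg _) _
          exact mul_le_mul (mul_le_mul r1 r2 (by positivity) nx1) r3 (by positivity)
            (mul_nonneg nx1 (by positivity))
  have hwtc : 0 < wt d θ₁ θ₂ θ₃ c := by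
    rw [wt]
    have : (0:ℝ) < normPrime d c ^ θ₁ := Real.rpow_pos_of_pos hc1 _
    positivity
  have hballvol : volume (ball c R) = ENNReal.ofReal (R ^ (d + 1)) * V := by
    rw [Measure.addHaar_ball_of_pos volume c hR, finrank_euclideanSpace_fin]
  have hrpow : R ^ ((d : ℝ) + 1) = R ^ (d + 1) := by
    rw [show ((d : ℝ) + 1) = ((d + 1 : ℕ) : ℝ) by push_cast; ring, Real.rpow_natCast]
  calc ENNReal.ofReal (K * V.toReal * wt d θ₁ θ₂ θ₃ c * R ^ ((d : ℝ) + 1))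
      = ENNReal.ofReal (K * wt d θ₁ θ₂ θ₃ c) * volume (ball c R) := by
        have e : K * V.toReal * wt d θ₁ θ₂ θ₃ c * R ^ (d + 1) =
            (K * wt d θ₁ θ₂ θ₃ c) * (R ^ (d + 1) * V.toReal) := by ring
        rw [hballvol, hrpow, e, ENNReal.ofReal_mul (mul_nonneg hKpos.le hwtc.le),
          ENNReal.ofReal_mul (by positivity : (0:ℝ) ≤ R ^ (d + 1)),
          ENNReal.ofReal_toReal hVne]
    _ = ∫⁻ _x in ball c R, ENNReal.ofReal (K * wt d θ₁ θ₂ θ₃ c) := by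
        rw [setLIntegral_const]
    _ ≤ ∫⁻ x in ball c R, ENNReal.ofReal (wt d θ₁ θ₂ θ₃ x) := by
        apply setLIntegral_mono' measurableSet_ball
        intro x hx
        exact ENNReal.ofReal_le_ofReal (key x hx)


end Aniso
end
end
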